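/- arXiv:math/9808105 — 2 statements merged into one kernel-verified Lean document; each statement's English description precedes it below -/
import Mathlib

section
/- Let A₁ be a linear differential operator on ℝ. There exists a linear differential operator A₀ on ℝ such that (A₀(f))' = A₁(f') for all smooth f : ℝ → ℝ (i.e. d∘A₀ = A₁∘d on the de Rham complex Ω^0(ℝ) → Ω^1(ℝ)) if and only if the characteristic χ(A₁) is a constant function. -/
open Finset

private lemma sm_deriv {f : ℝ → ℝ} (h : ContDiff ℝ (⊤ : ℕ∞) f) : ContDiff ℝ (⊤ : ℕ∞) (deriv f) :=
  (contDiff_succ_iff_deriv.mp (h.of_le (by exact (by simp)))).2.2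

private lemma sm_iter {f : ℝ → ℝ} (h : ContDiff ℝ (⊤ : ℕ∞) f) (n : ℕ) :
    ContDiff ℝ (⊤ : ℕ∞) (iteratedDeriv n f) := by
  induction n with
  | zero => simpa [iteratedDeriv_zero] using h
  | succ n ih => rw [iteratedDeriv_succ]; exact sm_deriv ih

private lemma diff_of_sm {f : ℝ → ℝ} (h : ContDiff ℝ (⊤ : ℕ∞) f) : Differentiable ℝ f :=
  h.differentiable (by simp)

private lemma iter_zero_fun (n : ℕ) : iteratedDeriv n (0 : ℝ → ℝ) = 0 := by
  induction n with
  | zero => simp [iteratedDeriv_zero]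
  | succ n ih =>
    rw [iteratedDeriv_succ, ih]
    ext x
    exact deriv_const x 0

private lemma tsum_eq_range {c : ℕ → ℝ} {N : ℕ} (h : ∀ i, N ≤ i → c i = 0) :
    ∑' i, c i = ∑ i ∈ Finset.range N, c i :=
  tsum_eq_sum (fun i hi => h i (by simpa using hi))

private lemma iter_add {f g : ℝ → ℝ} (hf : ContDiff ℝ (⊤ : ℕ∞) f) (hg : ContDiff ℝ (⊤ : ℕ∞) g) (n : ℕ)
    (x : ℝ) : iteratedDeriv n (fun y => f y + g y) x = iteratedDeriv n f x + iteratedDeriv n g x := by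
  rw [← iteratedDerivWithin_univ, ← iteratedDerivWithin_univ, ← iteratedDerivWithin_univ]
  exact iteratedDerivWithin_add (Set.mem_univ x) uniqueDiffOn_univ
    ((hf.of_le (by exact_mod_cast le_top)).contDiffWithinAt) ((hg.of_le (by exact_mod_cast le_top)).contDiffWithinAt)

/-- derivative of a finite-sum differential operator applied to f -/
private lemma deriv_op_sum (b : ℕ → ℝ → ℝ) (hb : ∀ i, ContDiff ℝ (⊤ : ℕ∞) (b i)) {f : ℝ → ℝ}
    (hf : ContDiff ℝ (⊤ : ℕ∞) f) (N : ℕ) (x : ℝ) :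
    deriv (fun y => ∑ i ∈ Finset.range N, b i y * iteratedDeriv i f y) x
      = ∑ i ∈ Finset.range N,
          (deriv (b i) x * iteratedDeriv i f x + b i x * iteratedDeriv (i + 1) f x) := by
  have hdb : ∀ i, Differentiable ℝ (b i) := fun i => diff_of_sm (hb i)
  have hdf : ∀ i, Differentiable ℝ (iteratedDeriv i f) := fun i => diff_of_sm (sm_iter hf i)
  rw [deriv_fun_sum (fun i _ => ((hdb i).differentiableAt).fun_mul ((hdf i).differentiableAt))]
  refine Finset.sum_congr rfl fun i _ => ?_
  rw [deriv_fun_mul ((hdb i).differentiableAt) ((hdf i).differentiableAt), iteratedDeriv_succ]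

private lemma deriv_pow_sub (c : ℝ) (m : ℕ) (y : ℝ) :
    deriv (fun z : ℝ => (z - c) ^ m) y = m * (y - c) ^ (m - 1) := by
  have h1 : deriv (fun z : ℝ => (z - c) ^ m) y = deriv (fun w : ℝ => w ^ m) (y - c) :=
    deriv_comp_sub_const (f := fun w : ℝ => w ^ m) (a := c) (x := y)
  rw [h1, deriv_pow_field]

private lemma iter_pow_sub (c : ℝ) (k : ℕ) :
    ∀ i, iteratedDeriv i (fun y : ℝ => (y - c) ^ k)
      = fun y => (k.descFactorial i : ℝ) * (y - c) ^ (k - i) := by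
  intro i
  induction i with
  | zero => funext y; simp [iteratedDeriv_zero]
  | succ i ih =>
    funext y
    rw [iteratedDeriv_succ, ih]
    have hd : DifferentiableAt ℝ (fun z : ℝ => (z - c) ^ (k - i)) y :=
      ((differentiable_id.sub_const c).pow _).differentiableAt
    rw [deriv_const_mul _ hd, deriv_pow_sub]
    rw [Nat.descFactorial_succ]
    push_cast
    rw [show k - i - 1 = k - (i + 1) from rfl]
    ring

private lemma iter_pow_self (c : ℝ) (k i : ℕ) :
    iteratedDeriv i (fun y : ℝ => (y - c) ^ k) c = if i = k then (k.factorial : ℝ) else 0 := by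
  rw [iter_pow_sub]
  rcases lt_trichotomy i k with h | h | h
  · simp [Nat.sub_ne_zero_of_lt h, zero_pow, h.ne, sub_self]
  · subst h
    simp [Nat.descFactorial_self]
  · simp [Nat.descFactorial_eq_zero_iff_lt.mpr h, h.ne']

private lemma bound_of_finite {c : ℕ → ℝ → ℝ} (h : {i | c i ≠ 0}.Finite) :
    ∃ N, ∀ i, N ≤ i → c i = 0 := by
  obtain ⟨M, hM⟩ := h.bddAbove
  refine ⟨M + 1, fun i hi => ?_⟩
  by_contra hne
  have := hM (Set.mem_setOf.mpr hne)
  omega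

/-- For a linear differential operator `A₁ = Σ a_i (d/dx)^i` on `ℝ`, there
is a linear differential operator `A₀ = Σ b_i (d/dx)^i` with `d ∘ A₀ = A₁ ∘ d` on the
de Rham complex `Ω^0(ℝ) → Ω^1(ℝ)` (i.e. `(A₀ f)' = A₁(f')` for all smooth `f`) if and only
if the characteristic `χ(A₁) = Σ (−1)^i (d/dx)^i a_i` is a constant function. -/
theorem lift_exists_iff_chi_constant (a : ℕ → ℝ → ℝ)
    (ha : ∀ i, ContDiff ℝ (⊤ : ℕ∞) (a i)) (hfin : {i | a i ≠ 0}.Finite) :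
    (∃ b : ℕ → ℝ → ℝ, (∀ i, ContDiff ℝ (⊤ : ℕ∞) (b i)) ∧ {i | b i ≠ 0}.Finite ∧
        ∀ f : ℝ → ℝ, ContDiff ℝ (⊤ : ℕ∞) f → ∀ x,
          deriv (fun y => ∑' i, b i y * iteratedDeriv i f y) x =
            ∑' i, a i x * iteratedDeriv i (deriv f) x) ↔
      ∃ c : ℝ, ∀ x, ∑' i, (-1 : ℝ) ^ i * iteratedDeriv i (a i) x = c := by
  constructor
  · rintro ⟨b, hb, hbfin, heq⟩
    obtain ⟨N1, h1⟩ := bound_of_finite hfin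
    obtain ⟨N2, h2⟩ := bound_of_finite hbfin
    set N := max N1 N2 with hNdef
    have hA : ∀ i, N ≤ i → a i = 0 := fun i hi => h1 i (le_trans (le_max_left _ _) hi)
    have hB : ∀ i, N ≤ i → b i = 0 := fun i hi => h2 i (le_trans (le_max_right _ _) hi)
    have master : ∀ M, N ≤ M → ∀ f : ℝ → ℝ, ContDiff ℝ (⊤ : ℕ∞) f → ∀ x,
        ∑ i ∈ Finset.range M,
            (deriv (b i) x * iteratedDeriv i f x + b i x * iteratedDeriv (i+1) f x)
          = ∑ i ∈ Finset.range M, a i x * iteratedDeriv (i+1) f x := by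
      intro M hM f hf x
      have h0 := heq f hf x
      have hL : (fun y => ∑' i, b i y * iteratedDeriv i f y)
          = fun y => ∑ i ∈ Finset.range M, b i y * iteratedDeriv i f y :=
        funext fun y => tsum_eq_range (fun i hi => by rw [hB i (le_trans hM hi)]; simp)
      rw [hL, deriv_op_sum b hb hf M x,
        tsum_eq_range (N := M) (fun i hi => by rw [hA i (le_trans hM hi)]; simp)] at h0
      simp only [← iteratedDeriv_succ'] at h0
      exact h0
    have hb0' : ∀ x, deriv (b 0) x = 0 := by
      intro x
      have hk := master (N + 2) (by omega) (fun y => (y - x) ^ 0)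
        ((contDiff_id.sub contDiff_const).pow 0) x
      simp only [iter_pow_self] at hk
      simp only [Nat.factorial_zero, Nat.cast_one, mul_ite, mul_one, mul_zero,
        Nat.succ_ne_zero, if_false, add_zero, Finset.sum_ite_eq', Finset.mem_range,
        Finset.sum_const_zero] at hk
      simpa using hk
    have hrec : ∀ m x, b m x + deriv (b (m+1)) x = a m x := by
      intro m x
      have hk := master (N + m + 2) (by omega) (fun y => (y - x) ^ (m+1))
        ((contDiff_id.sub contDiff_const).pow (m+1)) x
      simp only [iter_pow_self] at hk
      have hiff : ∀ i : ℕ, (i + 1 = m + 1) ↔ (i = m) := fun i => by omega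
      simp only [hiff, mul_ite, mul_zero, Finset.sum_add_distrib,
        Finset.sum_ite_eq', Finset.mem_range] at hk
      rw [if_pos (by omega), if_pos (by omega), if_pos (by omega)] at hk
      have hfac : ((m+1).factorial : ℝ) ≠ 0 :=
        Nat.cast_ne_zero.mpr (Nat.factorial_ne_zero _)
      have hk2 : (deriv (b (m+1)) x + b m x) * ((m+1).factorial : ℝ)
          = a m x * ((m+1).factorial : ℝ) := by rw [add_mul]; linarith [hk]
      have := mul_right_cancel₀ hfac hk2
      linarith [this]
    refine ⟨b 0 0, fun x => ?_⟩
    rw [tsum_eq_range (N := N) (fun i hi => by rw [hA i hi, iter_zero_fun]; simp)]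
    have hterm : ∀ i, iteratedDeriv i (a i) x
        = iteratedDeriv i (b i) x + iteratedDeriv (i+1) (b (i+1)) x := by
      intro i
      have hai : a i = fun y => b i y + deriv (b (i+1)) y :=
        funext fun y => (hrec i y).symm
      rw [hai, iter_add (hb i) (sm_deriv (hb (i+1))) i x, ← iteratedDeriv_succ']
    have hterm2 : ∀ i ∈ Finset.range N, (-1:ℝ)^i * iteratedDeriv i (a i) x
        = (fun j => (-1:ℝ)^j * iteratedDeriv j (b j) x) i
          - (fun j => (-1:ℝ)^j * iteratedDeriv j (b j) x) (i+1) := by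
      intro i _
      simp only [hterm i, pow_succ]
      ring
    rw [Finset.sum_congr rfl hterm2, Finset.sum_range_sub']
    have hzN : b N = 0 := hB N le_rfl
    rw [hzN, iter_zero_fun]
    simp only [iteratedDeriv_zero, pow_zero, one_mul, Pi.zero_apply, mul_zero, sub_zero]
    exact is_const_of_deriv_eq_zero (diff_of_sm (hb 0)) hb0' x 0
  · rintro ⟨c, hc⟩
    obtain ⟨N, hN⟩ := bound_of_finite hfin
    set b : ℕ → ℝ → ℝ :=
      fun i x => ∑ j ∈ Finset.range N, (-1:ℝ)^j * iteratedDeriv j (a (i+j)) x with hbdef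
    have hbsm : ∀ i, ContDiff ℝ (⊤ : ℕ∞) (b i) := fun i =>
      ContDiff.sum fun j _ => contDiff_const.mul (sm_iter (ha _) j)
    have hb0 : ∀ i, N ≤ i → b i = 0 := by
      intro i hi
      funext x
      show (∑ j ∈ Finset.range N, (-1:ℝ)^j * iteratedDeriv j (a (i+j)) x) = 0
      refine Finset.sum_eq_zero fun j _ => ?_
      rw [hN (i+j) (by omega), iter_zero_fun]
      simp
    have hbderiv : ∀ i x, deriv (b i) x
        = ∑ j ∈ Finset.range N, (-1:ℝ)^j * iteratedDeriv (j+1) (a (i+j)) x := by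
      intro i x
      have h1 : deriv (b i) x
          = ∑ j ∈ Finset.range N, deriv (fun y => (-1:ℝ)^j * iteratedDeriv j (a (i+j)) y) x :=
        deriv_fun_sum (fun j _ =>
          ((diff_of_sm (sm_iter (ha _) j)).differentiableAt).const_mul _)
      rw [h1]
      refine Finset.sum_congr rfl fun j _ => ?_
      rw [deriv_const_mul _ ((diff_of_sm (sm_iter (ha _) j)).differentiableAt),
        ← iteratedDeriv_succ]
    have hrec : ∀ i x, b i x = a i x - deriv (b (i+1)) x := by
      intro i x
      rw [hbderiv]
      have h1 : b i x = ∑ j ∈ Finset.range (N+1), (-1:ℝ)^j * iteratedDeriv j (a (i+j)) x := by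
        rw [Finset.sum_range_succ, hN (i+N) (by omega), iter_zero_fun]
        simp [hbdef]
      rw [h1, Finset.sum_range_succ']
      have h2 : ∀ j ∈ Finset.range N, (-1:ℝ)^(j+1) * iteratedDeriv (j+1) (a (i+(j+1))) x
          = -((-1:ℝ)^j * iteratedDeriv (j+1) (a (i+1+j)) x) := by
        intro j _
        rw [show i+(j+1) = i+1+j from by omega, pow_succ]
        ring
      rw [Finset.sum_congr rfl h2, Finset.sum_neg_distrib]
      simp only [iteratedDeriv_zero, pow_zero, one_mul, Nat.add_zero]
      ring
    have hb0const : ∀ x, b 0 x = c := by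
      intro x
      rw [← hc x, tsum_eq_range (N := N)
        (fun i hi => by rw [hN i hi, iter_zero_fun]; simp)]
      simp [hbdef]
    have hderivb0 : ∀ x, deriv (b 0) x = 0 := by
      intro x
      have h1 : b 0 = fun _ => c := funext hb0const
      rw [h1]
      exact deriv_const x c
    refine ⟨b, hbsm, (Set.finite_Iio N).subset fun i hi => ?_, ?_⟩
    · by_contra h
      exact hi (hb0 i (by simpa [Set.mem_Iio] using h))
    intro f hf x
    have hL : (fun y => ∑' i, b i y * iteratedDeriv i f y)
        = fun y => ∑ i ∈ Finset.range N, b i y * iteratedDeriv i f y :=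
      funext fun y => tsum_eq_range (fun i hi => by rw [hb0 i hi]; simp)
    rw [hL, deriv_op_sum b hbsm hf N x,
      tsum_eq_range (N := N) (fun i hi => by rw [hN i hi]; simp)]
    simp only [← iteratedDeriv_succ']
    set g : ℕ → ℝ := fun i => deriv (b i) x * iteratedDeriv i f x with hgdef
    have hg0 : g 0 = 0 := by simp [hgdef, hderivb0 x]
    have hgN : g N = 0 := by
      have hz : b N = 0 := hb0 N le_rfl
      have hz2 : deriv (b N) x = 0 := by
        rw [hz, show (0:ℝ→ℝ) = fun _ : ℝ => (0:ℝ) from rfl]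
        exact deriv_const x 0
      simp [hgdef, hz2]
    have hshift : ∑ i ∈ Finset.range N, g i = ∑ i ∈ Finset.range N, g (i+1) := by
      have h3 : ∑ i ∈ Finset.range (N+1), g i
          = (∑ i ∈ Finset.range N, g (i+1)) + g 0 := Finset.sum_range_succ' g N
      have h4 : ∑ i ∈ Finset.range (N+1), g i
          = (∑ i ∈ Finset.range N, g i) + g N := Finset.sum_range_succ g N
      rw [hg0] at h3
      rw [hgN] at h4
      linarith [h3, h4]
    rw [Finset.sum_add_distrib]
    have h5 : ∑ i ∈ Finset.range N, b i x * iteratedDeriv (i+1) f x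
        = ∑ i ∈ Finset.range N,
            (a i x * iteratedDeriv (i+1) f x - g (i+1)) := by
      refine Finset.sum_congr rfl fun i _ => ?_
      rw [hrec i x]
      simp [hgdef]
      ring
    rw [h5, Finset.sum_sub_distrib, ← hshift]
    ring
end

section
/- For each local differential operator A : Ω^{N,0} → Ω^{N,0} (identifying Ω^{N,0} ≅ Loc(E) via f ↔ f dx^1∧⋯∧dx^N), there exists a local differential operator Ã : Ω^{N,0} → Ω^{N−1,0} such that A = d_H∘Ã + χ(A). -/
open scoped BigOperators

namespace JetBundle

/-- Multi-indices `J = (j_1,…,j_N)`. -/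
abbrev MI (N : ℕ) := Fin N → ℕ

/-- A point of the infinite jet bundle `J^∞E`, with coordinates `(x^i, u_J)`. -/
abbrev JetPt (N : ℕ) := (Fin N → ℝ) × (MI N → ℝ)

/-- Real-valued functions on the infinite jet bundle. -/
abbrev Fn (N : ℕ) := JetPt N → ℝ

/-- Partial derivative with respect to the base coordinate `x^i`. -/
noncomputable def pderivX {N : ℕ} (i : Fin N) (f : Fn N) : Fn N :=
  fun p => deriv (fun t => f (Function.update p.1 i t, p.2)) (p.1 i)

/-- Partial derivative with respect to the jet coordinate `u_J`. -/
noncomputable def pderivU {N : ℕ} (J : MI N) (f : Fn N) : Fn N :=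
  fun p => deriv (fun t => f (p.1, Function.update p.2 J t)) (p.2 J)

/-- `iJ` : the multi-index `J` with its `i`-th entry increased by `1`. -/
def inc {N : ℕ} (i : Fin N) (J : MI N) : MI N := Function.update J i (J i + 1)

/-- The total derivative `d/dx^i = ∂/∂x^i + Σ_J u_{iJ} ∂/∂u_J`. -/
noncomputable def Dtot {N : ℕ} (i : Fin N) (f : Fn N) : Fn N :=
  fun p => pderivX i f p + ∑' J : MI N, p.2 (inc i J) * pderivU J f p

/-- Iterated total derivative `(d/dx)^I`. -/
noncomputable def DPow {N : ℕ} (I : MI N) : Fn N → Fn N :=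
  (List.finRange N).foldr (fun i g => (Dtot i)^[I i] ∘ g) id

/-- Iterated vertical derivative `(∂/∂u)^α` for a finitely supported exponent `α`. -/
noncomputable def UPow {N : ℕ} (α : MI N →₀ ℕ) : Fn N → Fn N :=
  α.support.toList.foldr (fun J g => (pderivU J)^[α J] ∘ g) id

/-- A local function: a smooth function of the base coordinates and
finitely many jet coordinates `u_J`. -/
def IsLocal {N : ℕ} (f : Fn N) : Prop :=
  ∃ (S : Finset (MI N)) (g : ((Fin N → ℝ) × (↥S → ℝ)) → ℝ),
    ContDiff ℝ (⊤ : ℕ∞) g ∧ ∀ p : JetPt N, f p = g (p.1, fun J => p.2 J.1)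

/-- The formal differential degree of an exponent `α`: the maximal `|J|` with `α J ≠ 0`. -/
def degf {N : ℕ} (α : MI N →₀ ℕ) : ℕ := α.support.sup fun J => ∑ i, J i

/-- Index type for the coefficients of an `n`-multilinear local differential operator:
a tuple of multi-indices `(I_1,…,I_n)` and vertical exponents `(α_1,…,α_n)`. -/
abbrev Idx (N n : ℕ) := (Fin n → MI N) × (Fin n → (MI N →₀ ℕ))

/-- Coefficient data of an `n`-multilinear local differential operator. -/
abbrev OpData (N n : ℕ) := Idx N n → Fn N

/-- `n`-multilinear operators on functions on the jet bundle. -/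
abbrev Op (N n : ℕ) := (Fin n → Fn N) → Fn N

/-- An `n`-tuple of local functions. -/
def LocalTuple {N n : ℕ} (f : Fin n → Fn N) : Prop := ∀ j, IsLocal (f j)

/-- Coefficient data is admissible if all coefficients are local functions and, for each `m`,
only finitely many coefficients with `Σ_j deg_f(α_j) ≤ m` are nonzero. -/
def Good {N n : ℕ} (q : OpData N n) : Prop :=
  (∀ Iα, IsLocal (q Iα)) ∧
    ∀ m : ℕ, {Iα : Idx N n | q Iα ≠ 0 ∧ ∑ j, degf (Iα.2 j) ≤ m}.Finite

/-- The (unpolarized) realization of coefficient data: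
`A(f_1,…,f_n) = Σ p_{I,α} Π_j (d/dx)^{I_j} (∂/∂u)^{α_j} f_j`. -/
noncomputable def realizeU {N n : ℕ} (q : OpData N n) (f : Fin n → Fn N) : Fn N :=
  fun pt => ∑' Iα : Idx N n, q Iα pt * ∏ j, DPow (Iα.1 j) (UPow (Iα.2 j) (f j)) pt

/-- The polarized realization of coefficient data: the slot `I_1` records powers of
`d/dy_1 = Σ_j d/dx_j`, i.e. total derivatives applied to the whole product, while for `j ≥ 2`
the slot `I_j` records powers of `d/dy_j = d/dx_j` acting on the `j`-th argument:
`A(f_1,…,f_n) = Σ q_{I;α} (d/dx)^{I_1} [ (∂/∂u)^{α_1}f_1 · Π_{j≥2} (d/dx)^{I_j}(∂/∂u)^{α_j} f_j ]`. -/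
noncomputable def realizeP {N n : ℕ} [NeZero n] (q : OpData N n) (f : Fin n → Fn N) : Fn N :=
  fun pt => ∑' Iα : Idx N n, q Iα pt *
    DPow (Iα.1 0) (fun p => ∏ j,
      if j = (0 : Fin n) then UPow (Iα.2 j) (f j) p
      else DPow (Iα.1 j) (UPow (Iα.2 j) (f j)) p) pt

/-- The characteristic, on polarized coefficient data:
`χ(q)_{(0,I_2,…,I_n);α} := Σ_{I_1} (−1)^{|I_1|} (d/dx)^{I_1} q_{I_1,I_2,…,I_n;α}`. -/
noncomputable def chiData {N n : ℕ} [NeZero n] (q : OpData N n) : OpData N n :=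
  fun Iα =>
    if Iα.1 0 = 0 then
      fun pt => ∑' K : MI N,
        (-1 : ℝ) ^ (∑ i, K i) * DPow K (q (Function.update Iα.1 0 K, Iα.2)) pt
    else 0

/-- `q` is a polarized presentation of the operator `A` (on local functions). -/
def Presents {N n : ℕ} [NeZero n] (q : OpData N n) (A : Op N n) : Prop :=
  ∀ f, LocalTuple f → ∀ pt, A f pt = realizeP q f pt

/-- `A` is an `n`-multilinear local differential operator (unpolarized form). -/
def IsLDO {N n : ℕ} (A : Op N n) : Prop :=
  ∃ q : OpData N n, Good q ∧ ∀ f, LocalTuple f → ∀ pt, A f pt = realizeU q f pt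

/-- `A` is an `n`-multilinear local differential operator, given by a polarized presentation. -/
def IsPLDO {N n : ℕ} [NeZero n] (A : Op N n) : Prop :=
  ∃ q : OpData N n, Good q ∧ Presents q A

/-- `A` is an `n`-multilinear local differential operator with vanishing characteristic. -/
def ChiZero {N n : ℕ} [NeZero n] (A : Op N n) : Prop :=
  ∃ q : OpData N n, Good q ∧ Presents q A ∧
    ∀ f, LocalTuple f → ∀ pt, realizeP (chiData q) f pt = 0

/-- Precomposition `A ∘ d/dx^i_j` with the total derivative acting on the `j`-th argument. -/
noncomputable def precompD {N n : ℕ} (A : Op N n) (i : Fin N) (j : Fin n) : Op N n :=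
  fun f => A (Function.update f j (Dtot i (f j)))

/-- A horizontal form, recorded by its coefficients on the basis
`(dx)^ε = (dx^1)^{ε^1} ∧ ⋯ ∧ (dx^N)^{ε^N}`, `ε : Fin N → Bool`. -/
abbrev Form (N : ℕ) := (Fin N → Bool) → Fn N

/-- The form-degree `|ε|`. -/
def wt {N : ℕ} (ε : Fin N → Bool) : ℕ := ∑ i, if ε i then 1 else 0

/-- The sign exponent: the number of entries of `ε` below `i` which are set. -/
def pos {N : ℕ} (i : Fin N) (ε : Fin N → Bool) : ℕ := ∑ l, if l < i ∧ ε l then 1 else 0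

/-- The horizontal differential `d_H ω = Σ_i dx^i ∧ (d/dx^i) ω`. -/
noncomputable def dH {N : ℕ} (ω : Form N) : Form N :=
  fun δ pt => ∑ i : Fin N,
    if δ i then (-1 : ℝ) ^ pos i δ * Dtot i (ω (Function.update δ i false)) pt else 0

/-- A matrix of operators acting on horizontal forms (linear case). -/
abbrev FormOp (N : ℕ) := (Fin N → Bool) → (Fin N → Bool) → (Fn N → Fn N)

/-- Application of a matrix of operators to a form. -/
noncomputable def applyFO {N : ℕ} (M : FormOp N) (ω : Form N) : Form N :=
  fun δ pt => ∑ ε : Fin N → Bool, M ε δ (ω ε) pt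

/-- A degree element of `DEnd(n)`: a matrix indexed by basis multidegrees of the inputs
`(ε_1,…,ε_n)` and of the output `δ`, with `n`-multilinear operator entries. -/
abbrev DMat (N n : ℕ) := (Fin n → (Fin N → Bool)) → (Fin N → Bool) → Op N n

/-- All matrix entries are local differential operators. -/
def LDOMat {N n : ℕ} [NeZero n] (F : DMat N n) : Prop := ∀ εs δ, IsPLDO (F εs δ)

/-- `F` represents a degree-`k` map of the regraded horizontal complexes
(`Ω_i := Ω^{N−i,0}`): the entry at `(ε⃗, δ)` vanishes unless
`N − wt δ = k + Σ_j (N − wt ε_j)`. -/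
def GradedMat {N n : ℕ} (k : ℤ) (F : DMat N n) : Prop :=
  ∀ εs δ, F εs δ ≠ 0 → (wt δ : ℤ) = (N : ℤ) - k - ∑ j, ((N : ℤ) - (wt (εs j) : ℤ))

/-- The differential `(δf)_s = d_H f_s − (−1)^k f_{s−1} d_H^{⊗n}` of the complex `DEnd_*(n)`,
written out on matrix entries. -/
noncomputable def deltaMat {N n : ℕ} (k : ℤ) (F : DMat N n) : DMat N n :=
  fun εs δ g =>
    (fun pt => ∑ i : Fin N,
      if δ i then (-1 : ℝ) ^ pos i δ * Dtot i (F εs (Function.update δ i false) g) pt else 0)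
    -
    ((-1 : ℝ) ^ k) • (fun pt => ∑ j : Fin n, ∑ i : Fin N,
      if εs j i = false then
        (-1 : ℝ) ^ ((∑ l ∈ Finset.univ.filter fun l => l < j, wt (εs l)) + pos i (εs j)) *
          F (Function.update εs j (Function.update (εs j) i true)) δ
            (Function.update g j (Dtot i (g j))) pt
      else 0)

/-- A matrix of operators vanishes (on local arguments). -/
def MatZeroLoc {N n : ℕ} (F : DMat N n) : Prop :=
  ∀ εs δ g, LocalTuple g → ∀ pt, F εs δ g pt = 0

/-- Two matrices of operators agree (on local arguments). -/
def MatEqLoc {N n : ℕ} (F G : DMat N n) : Prop :=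
  ∀ εs δ g, LocalTuple g → ∀ pt, F εs δ g pt = G εs δ g pt

/-- The projection `B_0 : DEnd_0(n) → LDO(n)`, i.e. the component `f_0` on the identifications
`[(Ω_*)^{⊗n}]_0 ≅ Loc(E)^{⊗n}`, `Ω_0 ≅ Loc(E)`. -/
def B0 {N n : ℕ} (F : DMat N n) : Op N n := F (fun _ _ => true) fun _ => true

/-- A form with coefficients in `LDO(n)`: an element of the operator complex `O^*(n)`. -/
abbrev OForm (N n : ℕ) := (Fin N → Bool) → Op N n

/-- The differential of the operator complex: `d(A (dx)^ε) = Σ_i (d/dx^i ∘ A) dx^i ∧ (dx)^ε`. -/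
noncomputable def dO {N n : ℕ} (ω : OForm N n) : OForm N n :=
  fun δ g pt => ∑ i : Fin N,
    if δ i then (-1 : ℝ) ^ pos i δ * Dtot i (ω (Function.update δ i false) g) pt else 0

/-- An element of `O^*(n)` concentrated in degree `k`. -/
def OGraded {N n : ℕ} (k : ℕ) (ω : OForm N n) : Prop := ∀ δ, ω δ ≠ 0 → wt δ = k

/-- All coefficients are local differential operators. -/
def OLDO {N n : ℕ} [NeZero n] (ω : OForm N n) : Prop := ∀ δ, IsPLDO (ω δ)

/-- An element of `O^*(n)` vanishes on local arguments. -/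
def OZeroLoc {N n : ℕ} (ω : OForm N n) : Prop :=
  ∀ δ g, LocalTuple g → ∀ pt, ω δ g pt = 0

/-- Two elements of `O^*(n)` agree on local arguments. -/
def OEqLoc {N n : ℕ} (ω η : OForm N n) : Prop :=
  ∀ δ g, LocalTuple g → ∀ pt, ω δ g pt = η δ g pt

/-- The Euler operator `E(L dx^1∧⋯∧dx^N) = Σ_I (−1)^{|I|} (d/dx)^I (∂L/∂u_I)`. -/
noncomputable def Euler {N : ℕ} (L : Fn N) : Fn N :=
  fun pt => ∑' I : MI N, (-1 : ℝ) ^ (∑ i, I i) * DPow I (pderivU I L) pt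

end JetBundle
namespace JetBundle

variable {N : ℕ}

/-! ### Section A : local functions with fixed support -/

/-- The finite-dimensional model space for support `S`. -/
abbrev ESp (N : ℕ) (S : Finset (MI N)) := (Fin N → ℝ) × (↥S → ℝ)

def proj (S : Finset (MI N)) : JetPt N → ESp N S := fun p => (p.1, fun J => p.2 J.1)

/-- `f` is local with support contained in `S`. -/
def Loc (S : Finset (MI N)) (f : Fn N) : Prop :=
  ∃ g : ESp N S → ℝ, ContDiff ℝ (⊤ : ℕ∞) g ∧ ∀ p, f p = g (proj S p)

lemma isLocal_iff {f : Fn N} : IsLocal f ↔ ∃ S, Loc S f := Iff.rfl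

lemma Loc.isLocal {S : Finset (MI N)} {f : Fn N} (h : Loc S f) : IsLocal f := ⟨S, h⟩

lemma Loc.mono {S S' : Finset (MI N)} {f : Fn N} (hSS : S ⊆ S') (h : Loc S f) : Loc S' f := by
  obtain ⟨g, hg, hfg⟩ := h
  refine ⟨fun z => g (z.1, fun J => z.2 ⟨J.1, hSS J.2⟩), ?_, fun p => hfg p⟩
  apply hg.comp
  refine ContDiff.prodMk contDiff_fst ?_
  exact contDiff_pi.2 fun J => (contDiff_pi.1 contDiff_snd : ∀ J' : ↥S', ContDiff ℝ (⊤ : ℕ∞) fun z : ESp N S' => z.2 J') ⟨J.1, hSS J.2⟩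

lemma Loc.const (S : Finset (MI N)) (c : ℝ) : Loc S (fun _ => c) :=
  ⟨fun _ => c, contDiff_const, fun _ => rfl⟩

lemma Loc.zero (S : Finset (MI N)) : Loc S (fun _ => (0:ℝ)) := Loc.const S 0

lemma Loc.add {S : Finset (MI N)} {f g : Fn N} (hf : Loc S f) (hg : Loc S g) :
    Loc S (fun p => f p + g p) := by
  obtain ⟨F, hF, hfF⟩ := hf; obtain ⟨G, hG, hgG⟩ := hg
  exact ⟨fun z => F z + G z, hF.add hG, fun p => by simp [hfF p, hgG p]⟩

lemma Loc.mul {S : Finset (MI N)} {f g : Fn N} (hf : Loc S f) (hg : Loc S g) :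
    Loc S (fun p => f p * g p) := by
  obtain ⟨F, hF, hfF⟩ := hf; obtain ⟨G, hG, hgG⟩ := hg
  exact ⟨fun z => F z * G z, hF.mul hG, fun p => by simp [hfF p, hgG p]⟩

lemma Loc.smul {S : Finset (MI N)} {f : Fn N} (c : ℝ) (hf : Loc S f) :
    Loc S (fun p => c * f p) := (Loc.const S c).mul hf

lemma Loc.sub {S : Finset (MI N)} {f g : Fn N} (hf : Loc S f) (hg : Loc S g) :
    Loc S (fun p => f p - g p) := by
  have := hf.add ((Loc.const S (-1)).mul hg)
  convert this using 2 with p; ring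

lemma Loc.coord {S : Finset (MI N)} {K : MI N} (hK : K ∈ S) :
    Loc S (fun p => p.2 K) := by
  refine ⟨fun z => z.2 ⟨K, hK⟩, (contDiff_pi.1 contDiff_snd : ∀ J' : ↥S, ContDiff ℝ (⊤ : ℕ∞) fun z : ESp N S => z.2 J') ⟨K, hK⟩, fun p => rfl⟩

lemma Loc.finsum {S : Finset (MI N)} {ι : Type*} (F : Finset ι) {f : ι → Fn N}
    (hf : ∀ x ∈ F, Loc S (f x)) : Loc S (fun p => ∑ x ∈ F, f x p) := by
  classical
  induction F using Finset.induction_on with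
  | empty => simpa using Loc.zero S
  | @insert a s hx ih =>
      have h1 := hf a (Finset.mem_insert_self a s)
      have h2 := ih fun x hx' => hf x (Finset.mem_insert_of_mem hx')
      have := h1.add h2
      convert this using 2 with p
      rw [Finset.sum_insert hx]

/-- common support -/
lemma Loc.union_left {S T : Finset (MI N)} {f : Fn N} (h : Loc S f) : Loc (S ∪ T) f :=
  h.mono Finset.subset_union_left

lemma Loc.union_right {S T : Finset (MI N)} {f : Fn N} (h : Loc T f) : Loc (S ∪ T) f :=
  h.mono Finset.subset_union_right

/-! ### Section B : derivatives of local functions -/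

/-- basis vector in the `x`-direction -/
noncomputable def vx (S : Finset (MI N)) (i : Fin N) : ESp N S := (Pi.single i 1, 0)

/-- basis vector in the `u_J`-direction -/
noncomputable def vu (S : Finset (MI N)) (j : ↥S) : ESp N S := (0, Pi.single j 1)

lemma hasDerivAt_line {E : Type*} [NormedAddCommGroup E] [NormedSpace ℝ E] {g : E → ℝ}
    {z : E} (hg : DifferentiableAt ℝ g z) (e : E) (t₀ : ℝ) :
    HasDerivAt (fun t => g (z + (t - t₀) • e)) (fderiv ℝ g z e) t₀ := by
  have h1 : HasDerivAt (fun t : ℝ => z + (t - t₀) • e) e t₀ := by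
    simpa using (((hasDerivAt_id t₀).sub_const t₀).smul_const e).const_add z
  have h4 : HasFDerivAt g (fderiv ℝ g z) (z + (t₀ - t₀) • e) := by
    simpa using hg.hasFDerivAt
  exact h4.comp_hasDerivAt t₀ h1

lemma proj_updateX {S : Finset (MI N)} (p : JetPt N) (i : Fin N) (t : ℝ) :
    proj S (Function.update p.1 i t, p.2) = proj S p + (t - p.1 i) • vx S i := by
  refine Prod.ext ?_ ?_
  · funext j
    by_cases hj : j = i
    · subst hj; simp [proj, vx, Function.update_self, Pi.single_eq_same]
    · simp [proj, vx, Function.update_of_ne hj, Pi.single_eq_of_ne hj]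
  · funext K
    simp [proj, vx]

lemma proj_updateU_mem {S : Finset (MI N)} (p : JetPt N) {J : MI N} (hJ : J ∈ S) (t : ℝ) :
    proj S (p.1, Function.update p.2 J t) = proj S p + (t - p.2 J) • vu S ⟨J, hJ⟩ := by
  refine Prod.ext ?_ ?_
  · funext j; simp [proj, vu]
  · funext K
    by_cases hK : K = ⟨J, hJ⟩
    · subst hK; simp [proj, vu, Function.update_self, Pi.single_eq_same]
    · have hK1 : K.1 ≠ J := fun h => hK (Subtype.ext h)
      simp [proj, vu, Function.update_of_ne hK1, Pi.single_eq_of_ne hK]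

lemma proj_updateU_not_mem {S : Finset (MI N)} (p : JetPt N) {J : MI N} (hJ : J ∉ S) (t : ℝ) :
    proj S (p.1, Function.update p.2 J t) = proj S p := by
  refine Prod.ext rfl ?_
  funext K
  have hK1 : K.1 ≠ J := fun h => hJ (h ▸ K.2)
  simp [proj, Function.update_of_ne hK1]

section Derivs

variable {S : Finset (MI N)} {f f₂ : Fn N}

lemma contDiff_dirD {g : ESp N S → ℝ} (hg : ContDiff ℝ (⊤ : ℕ∞) g) (e : ESp N S) :
    ContDiff ℝ (⊤ : ℕ∞) (fun z => fderiv ℝ g z e) :=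
  (hg.fderiv_right (by simp)).clm_apply contDiff_const

lemma pderivX_rep {g : ESp N S → ℝ} (hg : ContDiff ℝ (⊤ : ℕ∞) g) (hfg : ∀ p, f p = g (proj S p))
    (i : Fin N) (p : JetPt N) :
    pderivX i f p = fderiv ℝ g (proj S p) (vx S i) := by
  unfold pderivX
  have h : (fun t => f (Function.update p.1 i t, p.2))
      = fun t => g (proj S p + (t - p.1 i) • vx S i) := by
    funext t
    rw [hfg, proj_updateX]
  rw [h]
  exact (hasDerivAt_line ((hg.differentiable (by simp)).differentiableAt) _ _).deriv

lemma pderivU_rep {g : ESp N S → ℝ} (hg : ContDiff ℝ (⊤ : ℕ∞) g) (hfg : ∀ p, f p = g (proj S p))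
    {J : MI N} (hJ : J ∈ S) (p : JetPt N) :
    pderivU J f p = fderiv ℝ g (proj S p) (vu S ⟨J, hJ⟩) := by
  unfold pderivU
  have h : (fun t => f (p.1, Function.update p.2 J t))
      = fun t => g (proj S p + (t - p.2 J) • vu S ⟨J, hJ⟩) := by
    funext t
    rw [hfg, proj_updateU_mem (hJ := hJ)]
  rw [h]
  exact (hasDerivAt_line ((hg.differentiable (by simp)).differentiableAt) _ _).deriv

lemma pderivU_not_mem {J : MI N} (hf : Loc S f) (hJ : J ∉ S) :
    pderivU J f = fun _ => (0:ℝ) := by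
  obtain ⟨g, hg, hfg⟩ := hf
  funext p
  unfold pderivU
  have h : (fun t => f (p.1, Function.update p.2 J t)) = fun _ => g (proj S p) := by
    funext t
    rw [hfg, proj_updateU_not_mem (hJ := hJ)]
  rw [h, deriv_const]

lemma Loc.pdX (hf : Loc S f) (i : Fin N) : Loc S (pderivX i f) := by
  obtain ⟨g, hg, hfg⟩ := hf
  exact ⟨fun z => fderiv ℝ g z (vx S i), contDiff_dirD hg _,
    fun p => pderivX_rep hg hfg i p⟩

lemma Loc.pdU (hf : Loc S f) (J : MI N) : Loc S (pderivU J f) := by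
  by_cases hJ : J ∈ S
  · obtain ⟨g, hg, hfg⟩ := hf
    exact ⟨fun z => fderiv ℝ g z (vu S ⟨J, hJ⟩), contDiff_dirD hg _,
      fun p => pderivU_rep hg hfg hJ p⟩
  · rw [pderivU_not_mem hf hJ]; exact Loc.zero S

lemma Loc.hasDerivAt_X (hf : Loc S f) (i : Fin N) (p : JetPt N) :
    HasDerivAt (fun t => f (Function.update p.1 i t, p.2)) (pderivX i f p) (p.1 i) := by
  obtain ⟨g, hg, hfg⟩ := hf
  have h : (fun t => f (Function.update p.1 i t, p.2))
      = fun t => g (proj S p + (t - p.1 i) • vx S i) := by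
    funext t; rw [hfg, proj_updateX]
  rw [pderivX_rep hg hfg i p, h]
  exact hasDerivAt_line ((hg.differentiable (by simp)).differentiableAt) _ _

lemma Loc.hasDerivAt_U (hf : Loc S f) (J : MI N) (p : JetPt N) :
    HasDerivAt (fun t => f (p.1, Function.update p.2 J t)) (pderivU J f p) (p.2 J) := by
  by_cases hJ : J ∈ S
  · obtain ⟨g, hg, hfg⟩ := hf
    have h : (fun t => f (p.1, Function.update p.2 J t))
        = fun t => g (proj S p + (t - p.2 J) • vu S ⟨J, hJ⟩) := by
      funext t; rw [hfg, proj_updateU_mem (hJ := hJ)]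
    rw [pderivU_rep hg hfg hJ p, h]
    exact hasDerivAt_line ((hg.differentiable (by simp)).differentiableAt) _ _
  · obtain ⟨g, hg, hfg⟩ := hf
    have h : (fun t => f (p.1, Function.update p.2 J t)) = fun _ => g (proj S p) := by
      funext t; rw [hfg, proj_updateU_not_mem (hJ := hJ)]
    rw [pderivU_not_mem ⟨g, hg, hfg⟩ hJ, h]
    simpa using hasDerivAt_const (p.2 J) (g (proj S p))

lemma pderivX_mul (hf : Loc S f) (hf₂ : Loc S f₂) (i : Fin N) (p : JetPt N) :
    pderivX i (fun q => f q * f₂ q) p = pderivX i f p * f₂ p + f p * pderivX i f₂ p := by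
  have h := ((hf.hasDerivAt_X i p).mul (hf₂.hasDerivAt_X i p)).deriv
  simpa [pderivX, Function.update_eq_self, Pi.mul_def] using h

lemma pderivU_mul (hf : Loc S f) (hf₂ : Loc S f₂) (J : MI N) (p : JetPt N) :
    pderivU J (fun q => f q * f₂ q) p = pderivU J f p * f₂ p + f p * pderivU J f₂ p := by
  have h := ((hf.hasDerivAt_U J p).mul (hf₂.hasDerivAt_U J p)).deriv
  simpa [pderivU, Function.update_eq_self, Pi.mul_def] using h

lemma pderivX_add (hf : Loc S f) (hf₂ : Loc S f₂) (i : Fin N) (p : JetPt N) :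
    pderivX i (fun q => f q + f₂ q) p = pderivX i f p + pderivX i f₂ p := by
  have h := ((hf.hasDerivAt_X i p).add (hf₂.hasDerivAt_X i p)).deriv
  simpa [pderivX, Pi.add_def] using h

lemma pderivU_add (hf : Loc S f) (hf₂ : Loc S f₂) (J : MI N) (p : JetPt N) :
    pderivU J (fun q => f q + f₂ q) p = pderivU J f p + pderivU J f₂ p := by
  have h := ((hf.hasDerivAt_U J p).add (hf₂.hasDerivAt_U J p)).deriv
  simpa [pderivU, Pi.add_def] using h

lemma pderivX_constfn (i : Fin N) (c : ℝ) (p : JetPt N) :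
    pderivX i (fun _ => c) p = 0 := by
  simp [pderivX]

lemma pderivU_constfn (J : MI N) (c : ℝ) (p : JetPt N) :
    pderivU J (fun _ => c) p = 0 := by
  simp [pderivU]

/-! Schwarz symmetry -/

lemma dirD_symm {g : ESp N S → ℝ} (hg : ContDiff ℝ (⊤ : ℕ∞) g) (z e e' : ESp N S) :
    fderiv ℝ (fun w => fderiv ℝ g w e') z e = fderiv ℝ (fun w => fderiv ℝ g w e) z e' := by
  have hd : Differentiable ℝ g := hg.differentiable (by simp)
  have hd' : Differentiable ℝ (fderiv ℝ g) :=
    (hg.fderiv_right (m := (⊤ : ℕ∞)) (by simp)).differentiable (by simp)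
  have hsym := second_derivative_symmetric (f := g) (f' := fderiv ℝ g)
    (f'' := fderiv ℝ (fderiv ℝ g) z) (fun y => (hd y).hasFDerivAt) ((hd' z).hasFDerivAt)
  have h1 : ∀ e₀ : ESp N S, fderiv ℝ (fun w => fderiv ℝ g w e₀) z
      = (fderiv ℝ (fderiv ℝ g) z).flip e₀ := by
    intro e₀
    have h := fderiv_clm_apply (c := fderiv ℝ g) (u := fun _ => e₀)
      (hd' z) (differentiableAt_const e₀)
    simpa using h
  rw [h1 e', h1 e]
  exact hsym e e'

lemma pderivX_pderivX_comm (hf : Loc S f) (i j : Fin N) (p : JetPt N) :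
    pderivX i (pderivX j f) p = pderivX j (pderivX i f) p := by
  obtain ⟨g, hg, hfg⟩ := hf
  rw [pderivX_rep (contDiff_dirD hg (vx S j)) (fun q => pderivX_rep hg hfg j q) i p,
      pderivX_rep (contDiff_dirD hg (vx S i)) (fun q => pderivX_rep hg hfg i q) j p]
  exact dirD_symm hg _ _ _

lemma pderivU_pderivX_comm (hf : Loc S f) (i : Fin N) (K : MI N) (p : JetPt N) :
    pderivU K (pderivX i f) p = pderivX i (pderivU K f) p := by
  by_cases hK : K ∈ S
  · obtain ⟨g, hg, hfg⟩ := hf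
    rw [pderivU_rep (contDiff_dirD hg (vx S i)) (fun q => pderivX_rep hg hfg i q) hK p,
        pderivX_rep (contDiff_dirD hg (vu S ⟨K, hK⟩)) (fun q => pderivU_rep hg hfg hK q) i p]
    exact (dirD_symm hg _ _ _).symm
  · rw [pderivU_not_mem (hf.pdX i) hK, pderivU_not_mem hf hK]
    simp [pderivX_constfn]

lemma pderivU_pderivU_comm (hf : Loc S f) (J K : MI N) (p : JetPt N) :
    pderivU K (pderivU J f) p = pderivU J (pderivU K f) p := by
  by_cases hJ : J ∈ S
  · by_cases hK : K ∈ S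
    · obtain ⟨g, hg, hfg⟩ := hf
      rw [pderivU_rep (contDiff_dirD hg (vu S ⟨J, hJ⟩)) (fun q => pderivU_rep hg hfg hJ q) hK p,
          pderivU_rep (contDiff_dirD hg (vu S ⟨K, hK⟩)) (fun q => pderivU_rep hg hfg hK q) hJ p]
      exact dirD_symm hg _ _ _
    · rw [pderivU_not_mem (hf.pdU J) hK, pderivU_not_mem hf hK]
      simp [pderivU_constfn]
  · rw [pderivU_not_mem hf hJ]
    by_cases hK : K ∈ S
    · rw [pderivU_not_mem (hf.pdU K) hJ]
      simp [pderivU_constfn]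
    · rw [pderivU_not_mem (hf.pdU K) hJ]
      simp [pderivU_constfn]

end Derivs

/-! ### Section C : the total derivative -/

section DtotSec

variable {S : Finset (MI N)} {f f₂ : Fn N}

lemma inc_apply (a : Fin N) (B : MI N) (k : Fin N) :
    inc a B k = if k = a then B k + 1 else B k := by
  rw [inc, Function.update_apply]
  split_ifs with h
  · subst h; rfl
  · rfl

lemma inc_comm (i j : Fin N) (J : MI N) : inc i (inc j J) = inc j (inc i J) := by
  funext k
  simp only [inc_apply]
  split_ifs <;> omega

lemma Dtot_eq_sum (hf : Loc S f) (i : Fin N) (p : JetPt N) :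
    Dtot i f p = pderivX i f p + ∑ J ∈ S, p.2 (inc i J) * pderivU J f p := by
  unfold Dtot
  congr 1
  refine tsum_eq_sum fun J hJ => ?_
  rw [pderivU_not_mem hf hJ]
  simp

lemma Dtot_coord (i : Fin N) (M : MI N) (p : JetPt N) :
    Dtot i (fun q => q.2 M) p = p.2 (inc i M) := by
  have hU : ∀ J : MI N, pderivU J (fun q : JetPt N => q.2 M) p = if J = M then 1 else 0 := by
    intro J
    by_cases h : J = M
    · subst h; simp [pderivU]
    · simp [pderivU, Function.update_of_ne (Ne.symm h), h]
  have hX : pderivX i (fun q : JetPt N => q.2 M) p = 0 := by simp [pderivX]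
  unfold Dtot
  rw [hX, tsum_eq_single M (fun J hJ => by rw [hU J]; simp [hJ])]
  rw [hU M]
  simp

lemma Dtot_add (hf : Loc S f) (hf₂ : Loc S f₂) (i : Fin N) (p : JetPt N) :
    Dtot i (fun q => f q + f₂ q) p = Dtot i f p + Dtot i f₂ p := by
  rw [Dtot_eq_sum (hf.add hf₂) i p, Dtot_eq_sum hf i p, Dtot_eq_sum hf₂ i p,
    pderivX_add hf hf₂ i p]
  have h : ∀ J ∈ S, p.2 (inc i J) * pderivU J (fun q => f q + f₂ q) p
      = p.2 (inc i J) * pderivU J f p + p.2 (inc i J) * pderivU J f₂ p := fun J _ => by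
    rw [pderivU_add hf hf₂]; ring
  rw [Finset.sum_congr rfl h, Finset.sum_add_distrib]
  ring

lemma Dtot_mul (hf : Loc S f) (hf₂ : Loc S f₂) (i : Fin N) (p : JetPt N) :
    Dtot i (fun q => f q * f₂ q) p = Dtot i f p * f₂ p + f p * Dtot i f₂ p := by
  rw [Dtot_eq_sum (hf.mul hf₂) i p, Dtot_eq_sum hf i p, Dtot_eq_sum hf₂ i p,
    pderivX_mul hf hf₂ i p]
  have h : ∀ J ∈ S, p.2 (inc i J) * pderivU J (fun q => f q * f₂ q) p
      = p.2 (inc i J) * pderivU J f p * f₂ p + f p * (p.2 (inc i J) * pderivU J f₂ p) :=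
    fun J _ => by rw [pderivU_mul hf hf₂]; ring
  rw [Finset.sum_congr rfl h, Finset.sum_add_distrib, ← Finset.sum_mul, ← Finset.mul_sum]
  ring

lemma Dtot_constfn (i : Fin N) (c : ℝ) (p : JetPt N) : Dtot i (fun _ => c) p = 0 := by
  unfold Dtot
  rw [pderivX_constfn]
  have : ∀ J : MI N, p.2 (inc i J) * pderivU J (fun _ => c) p = 0 := fun J => by
    rw [pderivU_constfn]; ring
  simp [this]

lemma Dtot_zero_fn (i : Fin N) : Dtot i (fun _ => (0:ℝ)) = fun _ => (0:ℝ) := by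
  funext p; exact Dtot_constfn i 0 p

lemma Dtot_smul (hf : Loc S f) (c : ℝ) (i : Fin N) (p : JetPt N) :
    Dtot i (fun q => c * f q) p = c * Dtot i f p := by
  rw [Dtot_mul (Loc.const S c) hf i p, Dtot_constfn]
  ring

lemma Loc.dtot (hf : Loc S f) (i : Fin N) : Loc (S ∪ S.image (inc i)) (Dtot i f) := by
  have h : Dtot i f = fun p => pderivX i f p + ∑ J ∈ S, p.2 (inc i J) * pderivU J f p :=
    funext (Dtot_eq_sum hf i)
  rw [h]
  refine Loc.add ((hf.pdX i).mono Finset.subset_union_left) (Loc.finsum S fun J hJ => ?_)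
  exact Loc.mul (Loc.coord (Finset.mem_union_right _ (Finset.mem_image_of_mem _ hJ)))
    ((hf.pdU J).mono Finset.subset_union_left)

lemma IsLocal.dtot {f : Fn N} (hf : IsLocal f) (i : Fin N) : IsLocal (Dtot i f) := by
  obtain ⟨S, hS⟩ := isLocal_iff.1 hf
  exact ⟨_, hS.dtot i⟩

lemma IsLocal.add' {f g : Fn N} (hf : IsLocal f) (hg : IsLocal g) :
    IsLocal (fun p => f p + g p) := by
  obtain ⟨S₁, h₁⟩ := isLocal_iff.1 hf
  obtain ⟨S₂, h₂⟩ := isLocal_iff.1 hg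
  exact ⟨S₁ ∪ S₂, (h₁.union_left).add (h₂.union_right)⟩

lemma IsLocal.mul' {f g : Fn N} (hf : IsLocal f) (hg : IsLocal g) :
    IsLocal (fun p => f p * g p) := by
  obtain ⟨S₁, h₁⟩ := isLocal_iff.1 hf
  obtain ⟨S₂, h₂⟩ := isLocal_iff.1 hg
  exact ⟨S₁ ∪ S₂, (h₁.union_left).mul (h₂.union_right)⟩

lemma IsLocal.constfn (c : ℝ) : IsLocal (fun _ : JetPt N => c) := ⟨∅, Loc.const ∅ c⟩

lemma IsLocal.zero' : IsLocal (fun _ : JetPt N => (0:ℝ)) := IsLocal.constfn 0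

lemma IsLocal.smul' {f : Fn N} (c : ℝ) (hf : IsLocal f) : IsLocal (fun p => c * f p) :=
  (IsLocal.constfn c).mul' hf

lemma IsLocal.finsum' {ι : Type*} (F : Finset ι) {f : ι → Fn N}
    (hf : ∀ x ∈ F, IsLocal (f x)) : IsLocal (fun p => ∑ x ∈ F, f x p) := by
  classical
  induction F using Finset.induction_on with
  | empty => simpa using IsLocal.zero'
  | @insert a s ha ih =>
      have h1 := hf a (Finset.mem_insert_self a s)
      have h2 := ih fun x hx' => hf x (Finset.mem_insert_of_mem hx')
      have h3 := h1.add' h2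
      convert h3 using 2 with p
      rw [Finset.sum_insert ha]

lemma Dtot_add' {f g : Fn N} (hf : IsLocal f) (hg : IsLocal g) (i : Fin N) (p : JetPt N) :
    Dtot i (fun q => f q + g q) p = Dtot i f p + Dtot i g p := by
  obtain ⟨S₁, h₁⟩ := isLocal_iff.1 hf
  obtain ⟨S₂, h₂⟩ := isLocal_iff.1 hg
  exact Dtot_add h₁.union_left h₂.union_right i p

lemma Dtot_mul' {f g : Fn N} (hf : IsLocal f) (hg : IsLocal g) (i : Fin N) (p : JetPt N) :
    Dtot i (fun q => f q * g q) p = Dtot i f p * g p + f p * Dtot i g p := by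
  obtain ⟨S₁, h₁⟩ := isLocal_iff.1 hf
  obtain ⟨S₂, h₂⟩ := isLocal_iff.1 hg
  exact Dtot_mul h₁.union_left h₂.union_right i p

lemma Dtot_smul' {f : Fn N} (hf : IsLocal f) (c : ℝ) (i : Fin N) (p : JetPt N) :
    Dtot i (fun q => c * f q) p = c * Dtot i f p := by
  obtain ⟨S₁, h₁⟩ := isLocal_iff.1 hf
  exact Dtot_smul h₁ c i p

lemma Dtot_sub' {f g : Fn N} (hf : IsLocal f) (hg : IsLocal g) (i : Fin N) (p : JetPt N) :
    Dtot i (fun q => f q - g q) p = Dtot i f p - Dtot i g p := by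
  have h : (fun q => f q - g q) = fun q => f q + (-1) * g q := by funext q; ring
  rw [h, Dtot_add' hf ((IsLocal.constfn (-1)).mul' hg) i p, Dtot_smul' hg (-1) i p]
  ring

lemma Dtot_finsum' {ι : Type*} (F : Finset ι) {f : ι → Fn N}
    (hf : ∀ x ∈ F, IsLocal (f x)) (i : Fin N) (p : JetPt N) :
    Dtot i (fun q => ∑ x ∈ F, f x q) p = ∑ x ∈ F, Dtot i (f x) p := by
  classical
  induction F using Finset.induction_on with
  | empty => simpa using Dtot_constfn i 0 p
  | @insert a s ha ih =>
      have h1 := hf a (Finset.mem_insert_self a s)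
      have h2 : ∀ x ∈ s, IsLocal (f x) := fun x hx' => hf x (Finset.mem_insert_of_mem hx')
      have key : (fun q => ∑ x ∈ insert a s, f x q) = fun q => f a q + ∑ x ∈ s, f x q := by
        funext q; rw [Finset.sum_insert ha]
      rw [key, Dtot_add' h1 (IsLocal.finsum' s h2) i p, ih h2, Finset.sum_insert ha]

/-! Commutation of total derivatives -/

lemma Dtot_Dtot_expand (hf : Loc S f) (i j : Fin N) (p : JetPt N) :
    Dtot j (Dtot i f) p =
      pderivX j (pderivX i f) p
      + ∑ K ∈ S, p.2 (inc j K) * pderivU K (pderivX i f) p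
      + (∑ J ∈ S, p.2 (inc j (inc i J)) * pderivU J f p
      + ∑ J ∈ S, p.2 (inc i J) * pderivX j (pderivU J f) p
      + ∑ J ∈ S, ∑ K ∈ S, p.2 (inc i J) * (p.2 (inc j K) * pderivU K (pderivU J f) p)) := by
  have hterm : ∀ J : MI N, IsLocal (fun q : JetPt N => q.2 (inc i J) * pderivU J f q) :=
    fun J => IsLocal.mul' ⟨{inc i J}, Loc.coord (Finset.mem_singleton_self _)⟩
      ⟨S, hf.pdU J⟩
  have hDi : Dtot i f = fun q => pderivX i f q + (∑ J ∈ S, q.2 (inc i J) * pderivU J f q) :=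
    funext (Dtot_eq_sum hf i)
  rw [hDi, Dtot_add' ⟨S, hf.pdX i⟩ (IsLocal.finsum' S fun J _ => hterm J) j p,
    Dtot_eq_sum (hf.pdX i) j p, Dtot_finsum' S (fun J _ => hterm J) j p]
  have hper : ∀ J ∈ S, Dtot j (fun q => q.2 (inc i J) * pderivU J f q) p
      = p.2 (inc j (inc i J)) * pderivU J f p
        + (p.2 (inc i J) * pderivX j (pderivU J f) p
        + ∑ K ∈ S, p.2 (inc i J) * (p.2 (inc j K) * pderivU K (pderivU J f) p)) := by
    intro J _
    rw [Dtot_mul' ⟨{inc i J}, Loc.coord (Finset.mem_singleton_self _)⟩ ⟨S, hf.pdU J⟩ j p,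
      Dtot_coord, Dtot_eq_sum (hf.pdU J) j p, mul_add, Finset.mul_sum]
  rw [Finset.sum_congr rfl hper, Finset.sum_add_distrib, Finset.sum_add_distrib]
  ring

lemma Dtot_comm' {f : Fn N} (hf : IsLocal f) (i j : Fin N) (p : JetPt N) :
    Dtot j (Dtot i f) p = Dtot i (Dtot j f) p := by
  obtain ⟨S, hS⟩ := isLocal_iff.1 hf
  rw [Dtot_Dtot_expand hS i j p, Dtot_Dtot_expand hS j i p]
  have e1 : pderivX j (pderivX i f) p = pderivX i (pderivX j f) p :=
    (pderivX_pderivX_comm hS i j p).symm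
  have e2 : ∑ K ∈ S, p.2 (inc j K) * pderivU K (pderivX i f) p
      = ∑ K ∈ S, p.2 (inc j K) * pderivX i (pderivU K f) p :=
    Finset.sum_congr rfl fun K _ => by rw [pderivU_pderivX_comm hS i K p]
  have e3 : ∑ J ∈ S, p.2 (inc j (inc i J)) * pderivU J f p
      = ∑ J ∈ S, p.2 (inc i (inc j J)) * pderivU J f p :=
    Finset.sum_congr rfl fun J _ => by rw [inc_comm j i J]
  have e4 : ∑ J ∈ S, p.2 (inc i J) * pderivX j (pderivU J f) p
      = ∑ J ∈ S, p.2 (inc i J) * pderivU J (pderivX j f) p :=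
    Finset.sum_congr rfl fun J _ => by rw [pderivU_pderivX_comm hS j J p]
  have e5 : ∑ J ∈ S, ∑ K ∈ S, p.2 (inc i J) * (p.2 (inc j K) * pderivU K (pderivU J f) p)
      = ∑ J ∈ S, ∑ K ∈ S, p.2 (inc j J) * (p.2 (inc i K) * pderivU K (pderivU J f) p) := by
    rw [Finset.sum_comm]
    refine Finset.sum_congr rfl fun K _ => Finset.sum_congr rfl fun J _ => ?_
    rw [pderivU_pderivU_comm hS J K p]
    ring
  rw [e1, e2, e3, e4, e5]
  ring

lemma Dtot_comm_fn {f : Fn N} (hf : IsLocal f) (i j : Fin N) :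
    Dtot j (Dtot i f) = Dtot i (Dtot j f) := funext (Dtot_comm' hf i j)

lemma IsLocal.dtotIter {f : Fn N} (hf : IsLocal f) (i : Fin N) (a : ℕ) :
    IsLocal ((Dtot i)^[a] f) := by
  induction a with
  | zero => simpa using hf
  | succ n ih => rw [Function.iterate_succ_apply']; exact ih.dtot i

lemma Dtot_iter_comm_single {f : Fn N} (hf : IsLocal f) (i j : Fin N) (b : ℕ) :
    Dtot i ((Dtot j)^[b] f) = (Dtot j)^[b] (Dtot i f) := by
  induction b with
  | zero => simp
  | succ n ih =>
      rw [Function.iterate_succ_apply', Function.iterate_succ_apply',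
        Dtot_comm_fn (hf.dtotIter j n) j i, ih]

lemma DtotIter_comm {f : Fn N} (hf : IsLocal f) (i j : Fin N) (a b : ℕ) :
    (Dtot i)^[a] ((Dtot j)^[b] f) = (Dtot j)^[b] ((Dtot i)^[a] f) := by
  induction a with
  | zero => simp
  | succ n ih =>
      rw [Function.iterate_succ_apply', Function.iterate_succ_apply', ih,
        Dtot_iter_comm_single (hf.dtotIter i n) i j b]

end DtotSec

/-! ### Section D : iterated total derivatives along lists -/

section ListSec

variable {S : Finset (MI N)} {f v : Fn N}

/-- `PD n l` applies `(d/dx^i)^{n i}` for `i` in `l`, head outermost. -/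
noncomputable def PD (n : MI N) (l : List (Fin N)) : Fn N → Fn N :=
  l.foldr (fun i g => (Dtot i)^[n i] ∘ g) id

/-- `RP n l` applies the blocks of `l` in the reverse order, head innermost. -/
noncomputable def RP (n : MI N) (l : List (Fin N)) : Fn N → Fn N :=
  l.foldl (fun g i => (Dtot i)^[n i] ∘ g) id

@[simp] lemma PD_nil (n : MI N) (f : Fn N) : PD n [] f = f := rfl

lemma PD_cons (n : MI N) (i : Fin N) (l : List (Fin N)) (f : Fn N) :
    PD n (i :: l) f = (Dtot i)^[n i] (PD n l f) := rfl

lemma PD_init (n : MI N) (l : List (Fin N)) (g₀ : Fn N → Fn N) (f : Fn N) :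
    (l.foldr (fun i g => (Dtot i)^[n i] ∘ g) g₀) f = PD n l (g₀ f) := by
  induction l with
  | nil => rfl
  | cons i l ih => simp only [List.foldr_cons, Function.comp_apply, ih, PD_cons]

lemma PD_append (n : MI N) (l₁ l₂ : List (Fin N)) (f : Fn N) :
    PD n (l₁ ++ l₂) f = PD n l₁ (PD n l₂ f) := by
  unfold PD
  rw [List.foldr_append]
  exact PD_init n l₁ _ f

lemma DPow_eq_PD (I : MI N) (f : Fn N) : DPow I f = PD I (List.finRange N) f := rfl

lemma PD_zero_exponents {n : MI N} : ∀ {l : List (Fin N)}, (∀ i ∈ l, n i = 0) →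
    ∀ f : Fn N, PD n l f = f := by
  intro l
  induction l with
  | nil => intro _ f; rfl
  | cons i l ih =>
      intro h f
      rw [PD_cons, h i (List.mem_cons_self), ih fun j hj => h j (List.mem_cons_of_mem i hj)]
      rfl

lemma PD_congr_exponents {n m : MI N} : ∀ {l : List (Fin N)}, (∀ i ∈ l, n i = m i) →
    ∀ f : Fn N, PD n l f = PD m l f := by
  intro l
  induction l with
  | nil => intro _ f; rfl
  | cons i l ih =>
      intro h f
      rw [PD_cons, PD_cons, h i (List.mem_cons_self),
        ih fun j hj => h j (List.mem_cons_of_mem i hj)]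

lemma RP_init (n : MI N) (l : List (Fin N)) (g₀ : Fn N → Fn N) (f : Fn N) :
    (l.foldl (fun g i => (Dtot i)^[n i] ∘ g) g₀) f = RP n l (g₀ f) := by
  induction l generalizing g₀ f with
  | nil => rfl
  | cons j l ih =>
      show (l.foldl _ ((Dtot j)^[n j] ∘ g₀)) f = (l.foldl _ ((Dtot j)^[n j] ∘ id)) (g₀ f)
      rw [ih, ih]
      rfl

lemma RP_cons (n : MI N) (i : Fin N) (l : List (Fin N)) (f : Fn N) :
    RP n (i :: l) f = RP n l ((Dtot i)^[n i] f) := by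
  show (l.foldl _ ((Dtot i)^[n i] ∘ id)) f = _
  rw [RP_init]
  rfl

lemma RP_eq_PD_reverse (n : MI N) : ∀ (l : List (Fin N)) (f : Fn N),
    RP n l f = PD n l.reverse f := by
  intro l
  induction l with
  | nil => intro f; rfl
  | cons i l ih =>
      intro f
      rw [RP_cons, ih, List.reverse_cons, PD_append]
      rfl

lemma IsLocal.pd {f : Fn N} (hf : IsLocal f) (n : MI N) :
    ∀ l : List (Fin N), IsLocal (PD n l f) := by
  intro l
  induction l with
  | nil => simpa using hf
  | cons i l ih => rw [PD_cons]; exact ih.dtotIter i (n i)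

lemma DtotIter_zero_fn (i : Fin N) (a : ℕ) :
    (Dtot i)^[a] (fun _ => (0:ℝ)) = fun _ => (0:ℝ) := by
  induction a with
  | zero => rfl
  | succ b ih => rw [Function.iterate_succ_apply, Dtot_zero_fn, ih]

lemma PD_zero (n : MI N) : ∀ l : List (Fin N), PD n l (fun _ => (0:ℝ)) = fun _ => (0:ℝ) := by
  intro l
  induction l with
  | nil => rfl
  | cons i l ih => rw [PD_cons, ih, DtotIter_zero_fn]

lemma PD_perm {n : MI N} {l l' : List (Fin N)} (h : l.Perm l') {f : Fn N} (hf : IsLocal f) :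
    PD n l f = PD n l' f := by
  induction h with
  | nil => rfl
  | cons x _ ih => rw [PD_cons, PD_cons, ih]
  | swap x y l =>
      rw [PD_cons, PD_cons, PD_cons, PD_cons]
      exact DtotIter_comm (hf.pd n l) y x (n y) (n x)
  | trans _ _ ih1 ih2 => rw [ih1, ih2]

lemma RP_eq_PD {n : MI N} {l : List (Fin N)} {f : Fn N} (hf : IsLocal f) :
    RP n l f = PD n l f := by
  rw [RP_eq_PD_reverse]
  exact PD_perm l.reverse_perm hf

lemma DPow_zero_fn (I : MI N) : DPow I (fun _ => (0:ℝ)) = fun _ => (0:ℝ) :=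
  PD_zero I (List.finRange N)

lemma IsLocal.dpow {f : Fn N} (hf : IsLocal f) (I : MI N) : IsLocal (DPow I f) :=
  hf.pd I (List.finRange N)

lemma DPow_zero_index {I : MI N} (hI : ∀ j, I j = 0) (f : Fn N) : DPow I f = f := by
  rw [DPow_eq_PD]
  exact PD_zero_exponents (fun i _ => hI i) f

/-! vertical iterated derivatives -/

lemma pdU_zero_fn (J : MI N) : pderivU J (fun _ => (0:ℝ)) = fun _ => (0:ℝ) := by
  funext p; exact pderivU_constfn J 0 p

lemma pdUIter_zero_fn (J : MI N) (k : ℕ) :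
    (pderivU J)^[k] (fun _ => (0:ℝ)) = fun _ => (0:ℝ) := by
  induction k with
  | zero => rfl
  | succ b ih => rw [Function.iterate_succ_apply, pdU_zero_fn, ih]

lemma Loc.pdUIter {S : Finset (MI N)} {f : Fn N} (hf : Loc S f) (J : MI N) (k : ℕ) :
    Loc S ((pderivU J)^[k] f) := by
  induction k with
  | zero => simpa using hf
  | succ b ih => rw [Function.iterate_succ_apply']; exact ih.pdU J

lemma Loc.foldU {S : Finset (MI N)} {c : MI N → ℕ} :
    ∀ (l : List (MI N)) {f : Fn N}, Loc S f →
      Loc S ((l.foldr (fun J g => (pderivU J)^[c J] ∘ g) id) f) := by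
  intro l
  induction l with
  | nil => intro f hf; simpa using hf
  | cons J l ih =>
      intro f hf
      exact (ih hf).pdUIter J (c J)

lemma Loc.upow {S : Finset (MI N)} {f : Fn N} (hf : Loc S f) (α : MI N →₀ ℕ) :
    Loc S (UPow α f) := Loc.foldU _ hf

lemma IsLocal.upow {f : Fn N} (hf : IsLocal f) (α : MI N →₀ ℕ) : IsLocal (UPow α f) := by
  obtain ⟨S, hS⟩ := isLocal_iff.1 hf
  exact ⟨S, hS.upow α⟩

lemma foldU_zero_of_bad {S : Finset (MI N)} {c : MI N → ℕ} :
    ∀ (l : List (MI N)) {f : Fn N}, Loc S f → (∃ J ∈ l, J ∉ S ∧ c J ≠ 0) →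
      (l.foldr (fun J g => (pderivU J)^[c J] ∘ g) id) f = fun _ => (0:ℝ) := by
  intro l
  induction l with
  | nil => rintro f _ ⟨J, hJ, _⟩; exact absurd hJ (List.not_mem_nil)
  | cons J₀ l ih =>
      rintro f hf ⟨J, hJ, hJS, hJc⟩
      rcases List.mem_cons.1 hJ with rfl | hJl
      · show (pderivU J)^[c J] ((l.foldr _ id) f) = _
        obtain ⟨k, hk⟩ := Nat.exists_eq_succ_of_ne_zero hJc
        rw [hk, Function.iterate_succ_apply,
          pderivU_not_mem (Loc.foldU l hf) hJS, pdUIter_zero_fn]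
      · show (pderivU J₀)^[c J₀] ((l.foldr _ id) f) = _
        rw [ih hf ⟨J, hJl, hJS, hJc⟩, pdUIter_zero_fn]

lemma UPow_zero_of_bad {S : Finset (MI N)} {f : Fn N} (hf : Loc S f) {α : MI N →₀ ℕ}
    {J : MI N} (hJs : J ∈ α.support) (hJ : J ∉ S) : UPow α f = fun _ => (0:ℝ) := by
  unfold UPow
  exact foldU_zero_of_bad _ hf ⟨J, Finset.mem_toList.2 hJs, hJ, Finsupp.mem_support_iff.1 hJs⟩

end ListSec

/-! ### Section E : integration by parts -/

section TeleSec

lemma tele1 (i : Fin N) : ∀ (n : ℕ) {p : Fn N}, IsLocal p → ∀ {v : Fn N}, IsLocal v →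
    ∀ pt : JetPt N,
    p pt * (Dtot i)^[n] v pt
      = Dtot i (fun z => ∑ a ∈ Finset.range n,
          (-1:ℝ)^a * ((Dtot i)^[a] p z * (Dtot i)^[n-1-a] v z)) pt
        + (-1:ℝ)^n * ((Dtot i)^[n] p pt * v pt) := by
  intro n
  induction n with
  | zero =>
      intro p hp v hv pt
      have h0 : (fun z : JetPt N => ∑ a ∈ Finset.range 0,
          (-1:ℝ)^a * ((Dtot i)^[a] p z * (Dtot i)^[0-1-a] v z)) = fun _ => (0:ℝ) := by
        funext z; simp
      rw [h0, Dtot_zero_fn]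
      simp
  | succ n ih =>
      intro p hp v hv pt
      have hw : IsLocal ((Dtot i)^[n] v) := hv.dtotIter i n
      have hDp : IsLocal (Dtot i p) := hp.dtot i
      have h1 : p pt * (Dtot i)^[n+1] v pt
          = Dtot i (fun z => p z * (Dtot i)^[n] v z) pt
            - Dtot i p pt * (Dtot i)^[n] v pt := by
        rw [Function.iterate_succ_apply']
        have hm := Dtot_mul' hp hw i pt
        linarith [hm]
      have h2 := ih hDp hv pt
      rw [h1, h2]
      have h3 : (Dtot i)^[n] (Dtot i p) = (Dtot i)^[n+1] p :=
        (Function.iterate_succ_apply (Dtot i) n p).symm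
      rw [h3]
      have hA : IsLocal (fun z => p z * (Dtot i)^[n] v z) := hp.mul' hw
      have hB : IsLocal (fun z => ∑ a ∈ Finset.range n,
          (-1:ℝ)^a * ((Dtot i)^[a] (Dtot i p) z * (Dtot i)^[n-1-a] v z)) := by
        refine IsLocal.finsum' _ fun a _ => ?_
        exact IsLocal.smul' _ ((hDp.dtotIter i a).mul' (hv.dtotIter i _))
      have h5 : (fun z => p z * (Dtot i)^[n] v z - ∑ a ∈ Finset.range n,
            (-1:ℝ)^a * ((Dtot i)^[a] (Dtot i p) z * (Dtot i)^[n-1-a] v z))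
          = (fun z => ∑ a ∈ Finset.range (n+1),
            (-1:ℝ)^a * ((Dtot i)^[a] p z * (Dtot i)^[n+1-1-a] v z)) := by
        funext z
        rw [Finset.sum_range_succ']
        have e : ∀ x ∈ Finset.range n,
            (-1:ℝ)^(x+1) * ((Dtot i)^[x+1] p z * (Dtot i)^[n+1-1-(x+1)] v z)
              = -((-1:ℝ)^x * ((Dtot i)^[x] (Dtot i p) z * (Dtot i)^[n-1-x] v z)) := by
          intro x _
          have harith : n+1-1-(x+1) = n-1-x := by omega
          rw [harith, pow_succ, Function.iterate_succ_apply]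
          ring
        rw [Finset.sum_congr rfl e]
        have hz : n+1-1-0 = n := by omega
        rw [hz]
        simp only [pow_zero, one_mul, Function.iterate_zero_apply]
        rw [Finset.sum_neg_distrib]
        ring
      have h6 : Dtot i (fun z => p z * (Dtot i)^[n] v z) pt
            - Dtot i (fun z => ∑ a ∈ Finset.range n,
              (-1:ℝ)^a * ((Dtot i)^[a] (Dtot i p) z * (Dtot i)^[n-1-a] v z)) pt
          = Dtot i (fun z => ∑ a ∈ Finset.range (n+1),
              (-1:ℝ)^a * ((Dtot i)^[a] p z * (Dtot i)^[n+1-1-a] v z)) pt := by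
        rw [← Dtot_sub' hA hB i pt]
        exact congrArg (fun F => Dtot i F pt) h5
      rw [pow_succ]
      linear_combination h6

end TeleSec

section KeySec

lemma keyList (I : MI N) : ∀ (l pre : List (Fin N)), pre ++ l = List.finRange N →
    ∀ {p : Fn N}, IsLocal p →
    ∃ c : Fin N → MI N → Fn N,
      (∀ i C, IsLocal (c i C)) ∧
      (∀ i C, ¬ C ≤ I → c i C = fun _ => (0:ℝ)) ∧
      (p = (fun _ => (0:ℝ)) → ∀ i C, c i C = fun _ => (0:ℝ)) ∧
      (∀ {v : Fn N}, IsLocal v → ∀ pt : JetPt N,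
        p pt * PD I l v pt
          = (∑ i : Fin N, Dtot i (fun z => ∑ C ∈ Finset.Iic I, c i C z * DPow C v z) pt)
            + (-1:ℝ)^((l.map I).sum) * (RP I l p pt * v pt)) := by
  intro l
  induction l with
  | nil =>
      intro pre _ p hp
      refine ⟨fun _ _ => fun _ => (0:ℝ), fun _ _ => IsLocal.zero', fun _ _ _ => rfl,
        fun _ _ _ => rfl, fun {v} hv pt => ?_⟩
      have e : (fun z : JetPt N =>
          ∑ C ∈ Finset.Iic I, (fun _ : JetPt N => (0:ℝ)) z * DPow C v z) = fun _ => (0:ℝ) := by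
        funext z; simp
      have h0 : ∀ j : Fin N, Dtot j (fun z : JetPt N =>
          ∑ C ∈ Finset.Iic I, (fun _ : JetPt N => (0:ℝ)) z * DPow C v z) pt = 0 := by
        intro j
        rw [e, Dtot_zero_fn]
      simp [h0, RP, Dtot_zero_fn]
  | cons i l' ih =>
      intro pre heq p hp
      have heq' : (pre ++ [i]) ++ l' = List.finRange N := by
        rw [List.append_assoc]; exact heq
      have hnd : (pre ++ i :: l').Nodup := by rw [heq]; exact List.nodup_finRange N
      have hil' : i ∉ l' := by
        have h2 : (i :: l').Nodup := hnd.of_append_right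
        exact (List.nodup_cons.1 h2).1
      have hpre : ∀ j ∈ pre, j ∉ (i :: l') := fun j hj hmem =>
        (List.disjoint_of_nodup_append hnd) hj hmem
      obtain ⟨c', hc'loc, hc'supp, hc'zero, hc'id⟩ := ih (pre ++ [i]) heq' (hp.dtotIter i (I i))
      -- target multi-indices for the head contributions
      set Ca : ℕ → MI N := fun a j => if j = i then I i - 1 - a else if j ∈ l' then I j else 0
        with hCadef
      have hCa_le : ∀ a, Ca a ≤ I := by
        intro a j
        simp only [hCadef]
        by_cases h1 : j = i
        · subst h1
          have hite : (if j = j then I j - 1 - a else if j ∈ l' then I j else 0)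
              = I j - 1 - a := if_pos rfl
          rw [hite]
          omega
        · rw [if_neg h1]
          split_ifs
          · exact le_rfl
          · exact Nat.zero_le _
      have hDPowCa : ∀ (a : ℕ) (v : Fn N), DPow (Ca a) v = (Dtot i)^[I i - 1 - a] (PD I l' v) := by
        intro a v
        rw [DPow_eq_PD, ← heq, PD_append]
        have hz : ∀ j ∈ pre, Ca a j = 0 := by
          intro j hj
          have h1 : j ≠ i := fun h => hpre j hj (h ▸ List.mem_cons_self)
          have h2 : j ∉ l' := fun h => hpre j hj (List.mem_cons_of_mem i h)
          simp [hCadef, h1, h2]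
        rw [PD_zero_exponents hz, PD_cons]
        have hceq : ∀ j ∈ l', Ca a j = I j := by
          intro j hj
          have h1 : j ≠ i := fun h => hil' (h ▸ hj)
          simp [hCadef, h1, hj]
        rw [PD_congr_exponents hceq]
        have hci : Ca a i = I i - 1 - a := by simp [hCadef]
        rw [hci]
      set chead : Fin N → MI N → Fn N := fun j C =>
        if j = i then
          (fun z => ∑ a ∈ Finset.range (I i),
            (if C = Ca a then (-1:ℝ)^a * (Dtot i)^[a] p z else 0))
        else fun _ => (0:ℝ)
        with hcheaddef
      have hcheadloc : ∀ j C, IsLocal (chead j C) := by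
        intro j C
        by_cases hj : j = i
        · simp only [hcheaddef, if_pos hj]
          refine IsLocal.finsum' _ fun a _ => ?_
          by_cases hC : C = Ca a
          · simp only [if_pos hC]
            exact IsLocal.smul' _ (hp.dtotIter i a)
          · simp only [if_neg hC]
            exact IsLocal.zero'
        · simp only [hcheaddef, if_neg hj]
          exact IsLocal.zero'
      refine ⟨fun j C z => chead j C z + (-1:ℝ)^(I i) * c' j C z, ?_, ?_, ?_, ?_⟩
      · intro j C
        exact (hcheadloc j C).add' (IsLocal.smul' _ (hc'loc j C))
      · intro j C hC
        funext z
        show chead j C z + (-1:ℝ)^(I i) * c' j C z = (0:ℝ)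
        have h1 : chead j C z = 0 := by
          by_cases hj : j = i
          · simp only [hcheaddef, if_pos hj]
            refine Finset.sum_eq_zero fun a _ => ?_
            have : C ≠ Ca a := fun h => hC (h ▸ hCa_le a)
            simp [this]
          · simp [hcheaddef, if_neg hj]
        rw [h1, hc'supp j C hC]
        simp
      · intro hp0 j C
        funext z
        show chead j C z + (-1:ℝ)^(I i) * c' j C z = (0:ℝ)
        have h1 : chead j C z = 0 := by
          by_cases hj : j = i
          · simp only [hcheaddef, if_pos hj]
            refine Finset.sum_eq_zero fun a _ => ?_
            rw [hp0, DtotIter_zero_fn]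
            simp
          · simp [hcheaddef, if_neg hj]
        have h2 : (Dtot i)^[I i] p = fun _ => (0:ℝ) := by rw [hp0, DtotIter_zero_fn]
        rw [h1, hc'zero h2 j C]
        simp
      · intro v hv pt
        simp only []
        have hvPD : IsLocal (PD I l' v) := hv.pd I l'
        have ht := tele1 i (I i) hp hvPD pt
        rw [PD_cons, ht, hc'id hv pt]
        set G' : Fin N → Fn N := fun j => fun z => ∑ C ∈ Finset.Iic I, c' j C z * DPow C v z
          with hG'def
        have hG'loc : ∀ j, IsLocal (G' j) :=
          fun j => IsLocal.finsum' _ fun C _ => (hc'loc j C).mul' (hv.dpow C)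
        have hHloc : ∀ j, IsLocal (fun z => ∑ C ∈ Finset.Iic I, chead j C z * DPow C v z) :=
          fun j => IsLocal.finsum' _ fun C _ => (hcheadloc j C).mul' (hv.dpow C)
        have hsplit : ∀ j : Fin N, (fun z => ∑ C ∈ Finset.Iic I,
              (chead j C z + (-1:ℝ)^(I i) * c' j C z) * DPow C v z)
            = fun z => (∑ C ∈ Finset.Iic I, chead j C z * DPow C v z)
              + (-1:ℝ)^(I i) * G' j z := by
          intro j
          funext z
          simp only [hG'def]
          rw [Finset.mul_sum, ← Finset.sum_add_distrib]
          exact Finset.sum_congr rfl fun C _ => by ring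
        have hjterm : ∀ j : Fin N, Dtot j (fun z => ∑ C ∈ Finset.Iic I,
              (chead j C z + (-1:ℝ)^(I i) * c' j C z) * DPow C v z) pt
            = Dtot j (fun z => ∑ C ∈ Finset.Iic I, chead j C z * DPow C v z) pt
              + (-1:ℝ)^(I i) * Dtot j (G' j) pt := by
          intro j
          rw [hsplit j, Dtot_add' (hHloc j) (IsLocal.smul' _ (hG'loc j)) j pt,
            Dtot_smul' (hG'loc j) _ j pt]
        have hhead0 : ∀ j : Fin N, j ≠ i →
            (fun z => ∑ C ∈ Finset.Iic I, chead j C z * DPow C v z) = fun _ => (0:ℝ) := by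
          intro j hj
          funext z
          refine Finset.sum_eq_zero fun C _ => ?_
          simp [hcheaddef, hj]
        have hheadi : (fun z => ∑ C ∈ Finset.Iic I, chead i C z * DPow C v z)
            = (fun z => ∑ a ∈ Finset.range (I i),
                (-1:ℝ)^a * ((Dtot i)^[a] p z * (Dtot i)^[I i - 1 - a] (PD I l' v) z)) := by
          funext z
          calc ∑ C ∈ Finset.Iic I, chead i C z * DPow C v z
              = ∑ C ∈ Finset.Iic I, ∑ a ∈ Finset.range (I i),
                  (if C = Ca a then ((-1:ℝ)^a * (Dtot i)^[a] p z) * DPow C v z else 0) := by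
                refine Finset.sum_congr rfl fun C _ => ?_
                simp only [hcheaddef, if_pos rfl]
                rw [Finset.sum_mul]
                refine Finset.sum_congr rfl fun a _ => ?_
                rw [ite_mul, zero_mul]
            _ = ∑ a ∈ Finset.range (I i), ∑ C ∈ Finset.Iic I,
                  (if C = Ca a then ((-1:ℝ)^a * (Dtot i)^[a] p z) * DPow C v z else 0) :=
                Finset.sum_comm
            _ = ∑ a ∈ Finset.range (I i), ((-1:ℝ)^a * (Dtot i)^[a] p z) * DPow (Ca a) v z := by
                refine Finset.sum_congr rfl fun a _ => ?_
                rw [Finset.sum_ite_eq' (Finset.Iic I) (Ca a)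
                  (fun C => ((-1:ℝ)^a * (Dtot i)^[a] p z) * DPow C v z),
                  if_pos (Finset.mem_Iic.2 (hCa_le a))]
            _ = ∑ a ∈ Finset.range (I i),
                  (-1:ℝ)^a * ((Dtot i)^[a] p z * (Dtot i)^[I i - 1 - a] (PD I l' v) z) := by
                refine Finset.sum_congr rfl fun a _ => ?_
                rw [hDPowCa a v]
                ring
        have hsum : ∑ j : Fin N, Dtot j (fun z => ∑ C ∈ Finset.Iic I,
              (chead j C z + (-1:ℝ)^(I i) * c' j C z) * DPow C v z) pt
            = Dtot i (fun z => ∑ a ∈ Finset.range (I i),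
                (-1:ℝ)^a * ((Dtot i)^[a] p z * (Dtot i)^[I i - 1 - a] (PD I l' v) z)) pt
              + (-1:ℝ)^(I i) * ∑ j : Fin N, Dtot j (G' j) pt := by
          rw [Finset.sum_congr rfl fun j _ => hjterm j, Finset.sum_add_distrib,
            ← Finset.mul_sum]
          congr 1
          rw [Finset.sum_eq_single i]
          · rw [hheadi]
          · intro j _ hj
            rw [hhead0 j hj, Dtot_zero_fn]
          · intro h
            exact absurd (Finset.mem_univ i) h
        rw [hsum, RP_cons, List.map_cons, List.sum_cons, pow_add]
        ring

lemma keyFull (I : MI N) {p : Fn N} (hp : IsLocal p) :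
    ∃ c : Fin N → MI N → Fn N,
      (∀ i C, IsLocal (c i C)) ∧
      (∀ i C, ¬ C ≤ I → c i C = fun _ => (0:ℝ)) ∧
      (p = (fun _ => (0:ℝ)) → ∀ i C, c i C = fun _ => (0:ℝ)) ∧
      (∀ {v : Fn N}, IsLocal v → ∀ pt : JetPt N,
        p pt * DPow I v pt
          = (∑ i : Fin N, Dtot i (fun z => ∑ C ∈ Finset.Iic I, c i C z * DPow C v z) pt)
            + (-1:ℝ)^(∑ j, I j) * (DPow I p pt * v pt)) := by
  obtain ⟨c, h1, h2, h3, h4⟩ := keyList I (List.finRange N) [] rfl hp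
  refine ⟨c, h1, h2, h3, fun {v} hv pt => ?_⟩
  have h5 := h4 hv pt
  rw [DPow_eq_PD, h5, RP_eq_PD hp, ← DPow_eq_PD]
  have hsign : ((List.finRange N).map I).sum = ∑ j, I j := (Fin.sum_univ_def I).symm
  rw [hsign]

end KeySec



/-! ### Section F : helpers for the main theorem -/

lemma fin1_eta {β : Type*} (g : Fin 1 → β) : (fun _ : Fin 1 => g 0) = g :=
  funext fun j => by rw [Subsingleton.elim j (0 : Fin 1)]

lemma realizeP_one (q : OpData N 1) (f : Fin 1 → Fn N) (pt : JetPt N) :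
    realizeP q f pt = ∑' Iα : Idx N 1, q Iα pt * DPow (Iα.1 0) (UPow (Iα.2 0) (f 0)) pt := by
  unfold realizeP
  refine tsum_congr fun Iα => ?_
  have h : (fun z => ∏ j : Fin 1, if j = 0 then UPow (Iα.2 j) (f j) z
      else DPow (Iα.1 j) (UPow (Iα.2 j) (f j)) z) = UPow (Iα.2 0) (f 0) := by
    funext z
    rw [Fin.prod_univ_one]
    simp
  rw [h]

lemma upow_vanish {S : Finset (MI N)} {h : Fn N} (hS : Loc S h) {α : MI N →₀ ℕ}
    (hdeg : ¬ degf α ≤ S.sup (fun J => ∑ i, J i)) : UPow α h = fun _ => (0:ℝ) := by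
  unfold degf at hdeg
  have hex : ∃ J ∈ α.support, ¬ (∑ i, J i) ≤ S.sup (fun J => ∑ i, J i) := by
    by_contra hcon
    push_neg at hcon
    exact hdeg (Finset.sup_le fun J hJ => hcon J hJ)
  obtain ⟨J, hJs, hJ⟩ := hex
  have hJS : J ∉ S := fun hmem => hJ (Finset.le_sup hmem)
  exact UPow_zero_of_bad hS hJs hJS


/-- For each local differential operator `A : Ω^{N,0} → Ω^{N,0}`
(given by polarized coefficient data `q`), there is a local differential operator
`Ã : Ω^{N,0} → Ω^{N−1,0}` (given by its `N` components `B i`, the coefficients of the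
`(N−1)`-forms omitting `dx^i`, with the signs absorbed) such that `A = d_H ∘ Ã + χ(A)`. -/
theorem exists_tilde_of_LDO {N : ℕ} (q : OpData N 1) (hq : Good q) :
    ∃ B : Fin N → Op N 1, (∀ i, IsPLDO (B i)) ∧
      ∀ f : Fin 1 → Fn N, LocalTuple f → ∀ pt,
        realizeP q f pt = (∑ i, Dtot i (B i f) pt) + realizeP (chiData q) f pt := by
  classical
  have key : ∀ (I : MI N) (α : Fin 1 → (MI N →₀ ℕ)),
      ∃ c : Fin N → MI N → Fn N,
        (∀ i C, IsLocal (c i C)) ∧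
        (∀ i C, ¬ C ≤ I → c i C = fun _ => (0:ℝ)) ∧
        (q ((fun _ => I), α) = (fun _ => (0:ℝ)) → ∀ i C, c i C = fun _ => (0:ℝ)) ∧
        (∀ {v : Fn N}, IsLocal v → ∀ pt : JetPt N,
          q ((fun _ => I), α) pt * DPow I v pt
            = (∑ i : Fin N, Dtot i (fun z => ∑ C ∈ Finset.Iic I, c i C z * DPow C v z) pt)
              + (-1:ℝ)^(∑ j, I j) * (DPow I (q ((fun _ => I), α)) pt * v pt)) :=
    fun I α => keyFull I (hq.1 ((fun _ => I), α))
  choose cc ccloc ccsupp cczero ccid using key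
  -- the finite set of multi-indices pairing with a given α
  set Fq : (Fin 1 → (MI N →₀ ℕ)) → Finset (MI N) := fun α =>
    ((hq.2 (degf (α 0))).toFinset.filter (fun Iα => Iα.2 = α)).image (fun Iα => Iα.1 0)
    with hFqdef
  have mem_Fq : ∀ {K : MI N} {α}, q ((fun _ => K), α) ≠ 0 → K ∈ Fq α := by
    intro K α hne
    refine Finset.mem_image.2 ⟨((fun _ => K), α), Finset.mem_filter.2
      ⟨(hq.2 _).mem_toFinset.2 ⟨hne, ?_⟩, rfl⟩, rfl⟩
    rw [Fin.sum_univ_one]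
  have Fq_spec : ∀ {K : MI N} {α}, K ∈ Fq α → q ((fun _ => K), α) ≠ 0 := by
    intro K α hK
    obtain ⟨Iα, hIα, hK1⟩ := Finset.mem_image.1 hK
    obtain ⟨hmem, h2⟩ := Finset.mem_filter.1 hIα
    have h3 := ((hq.2 _).mem_toFinset.1 hmem).1
    have h4 : (((fun _ => K) : Fin 1 → MI N), α) = Iα := by
      rw [← hK1, ← h2, fin1_eta]
    rw [h4]
    exact h3
  have Fq_not : ∀ {K : MI N} {α}, K ∉ Fq α → q ((fun _ => K), α) = fun _ => (0:ℝ) := by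
    intro K α hK
    by_contra hne
    exact hK (mem_Fq fun h0 => hne h0)
  -- the coefficient data of the antiderivative operators
  set d : Fin N → OpData N 1 := fun i Cα pt => ∑' I : MI N, cc I Cα.2 i (Cα.1 0) pt with hddef
  have hdfin : ∀ i Cα, d i Cα = fun pt => ∑ I ∈ Fq Cα.2, cc I Cα.2 i (Cα.1 0) pt := by
    intro i Cα
    funext pt
    refine tsum_eq_sum fun I hI => ?_
    rw [cczero I Cα.2 (Fq_not hI) i (Cα.1 0)]
  have hdGood : ∀ i, Good (d i) := by
    intro i
    constructor
    · intro Cα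
      rw [hdfin i Cα]
      exact IsLocal.finsum' _ fun I _ => ccloc I Cα.2 i (Cα.1 0)
    · intro m
      refine Set.Finite.subset (Finset.finite_toSet ((hq.2 m).toFinset.biUnion
        (fun Iα => (Finset.Iic (Iα.1 0)).image
          (fun C => (((fun _ => C) : Fin 1 → MI N), Iα.2))))) ?_
      rintro Cα ⟨hne, hdeg⟩
      obtain ⟨pt0, hpt⟩ := Function.ne_iff.1 hne
      have hpt' : ∑ I ∈ Fq Cα.2, cc I Cα.2 i (Cα.1 0) pt0 ≠ 0 := by
        rw [← congrFun (hdfin i Cα) pt0]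
        simpa using hpt
      obtain ⟨I, hIFq, hIne⟩ := Finset.exists_ne_zero_of_sum_ne_zero hpt'
      have hccne : cc I Cα.2 i (Cα.1 0) ≠ fun _ => (0:ℝ) := fun h => hIne (by rw [h])
      have hC : Cα.1 0 ≤ I := by
        by_contra hcon
        exact hccne (ccsupp I Cα.2 i (Cα.1 0) hcon)
      refine Finset.mem_coe.2 (Finset.mem_biUnion.2 ⟨((fun _ => I), Cα.2), ?_, ?_⟩)
      · refine (hq.2 m).mem_toFinset.2 ⟨Fq_spec hIFq, ?_⟩
        exact hdeg
      · refine Finset.mem_image.2 ⟨Cα.1 0, Finset.mem_Iic.2 hC, ?_⟩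
        rw [fin1_eta]
  refine ⟨fun i => realizeP (d i), fun i => ⟨d i, hdGood i, fun f _ pt => rfl⟩, ?_⟩
  intro f hf pt
  obtain ⟨S, hS⟩ := isLocal_iff.1 (hf 0)
  set m₀ := S.sup (fun J => ∑ i, J i) with hm₀
  have hvloc : ∀ β : MI N →₀ ℕ, IsLocal (UPow β (f 0)) := fun β => ⟨S, hS.upow β⟩
  have hvan : ∀ β : MI N →₀ ℕ, ¬ degf β ≤ m₀ → UPow β (f 0) = fun _ => (0:ℝ) :=
    fun β h => upow_vanish hS h
  set T := (hq.2 m₀).toFinset with hTdef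
  have hTmem : ∀ {Iα : Idx N 1}, Iα ∈ T ↔ (q Iα ≠ 0 ∧ degf (Iα.2 0) ≤ m₀) := by
    intro Iα
    rw [hTdef, Set.Finite.mem_toFinset]
    constructor
    · rintro ⟨h1, h2⟩
      rw [Fin.sum_univ_one] at h2
      exact ⟨h1, h2⟩
    · rintro ⟨h1, h2⟩
      refine ⟨h1, ?_⟩
      rw [Fin.sum_univ_one]
      exact h2
  have hterm0 : ∀ (I' : MI N) (β : MI N →₀ ℕ) (pt' : JetPt N), ¬ degf β ≤ m₀ →
      DPow I' (UPow β (f 0)) pt' = 0 := by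
    intro I' β pt' h
    rw [hvan β h, DPow_zero_fn]
  -- Step 1 : the realization of `q` as a finite sum
  have step1 : realizeP q f pt = ∑ Iα ∈ T, q Iα pt * DPow (Iα.1 0) (UPow (Iα.2 0) (f 0)) pt := by
    rw [realizeP_one]
    refine tsum_eq_sum fun Iα hIα => ?_
    by_cases hq0 : q Iα = 0
    · rw [hq0]
      simp
    · have hdeg : ¬ degf (Iα.2 0) ≤ m₀ := fun h => hIα (hTmem.2 ⟨hq0, h⟩)
      rw [hterm0 _ _ _ hdeg, mul_zero]
  -- Step 3 : the realization of `d i` as a finite sum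
  have step3 : ∀ (i : Fin N) (z : JetPt N), realizeP (d i) f z
      = ∑ Iα ∈ T, ∑ C ∈ Finset.Iic (Iα.1 0),
          cc (Iα.1 0) Iα.2 i C z * DPow C (UPow (Iα.2 0) (f 0)) z := by
    intro i z
    rw [realizeP_one]
    set T' := T.biUnion (fun Iα => (Finset.Iic (Iα.1 0)).image
      (fun C => (((fun _ => C) : Fin 1 → MI N), Iα.2))) with hT'def
    have hvanish : ∀ Cα : Idx N 1, Cα ∉ T' →
        d i Cα z * DPow (Cα.1 0) (UPow (Cα.2 0) (f 0)) z = 0 := by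
      intro Cα hCα
      by_cases hdeg : degf (Cα.2 0) ≤ m₀
      · have hd0 : d i Cα z = 0 := by
          rw [congrFun (hdfin i Cα) z]
          by_contra hne
          obtain ⟨I, hIFq, hIne⟩ := Finset.exists_ne_zero_of_sum_ne_zero hne
          have hC : Cα.1 0 ≤ I := by
            by_contra hcon
            rw [ccsupp I Cα.2 i (Cα.1 0) hcon] at hIne
            exact hIne rfl
          have hmemT : (((fun _ => I) : Fin 1 → MI N), Cα.2) ∈ T := hTmem.2 ⟨Fq_spec hIFq, hdeg⟩
          refine hCα (Finset.mem_biUnion.2 ⟨_, hmemT, Finset.mem_image.2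
            ⟨Cα.1 0, Finset.mem_Iic.2 hC, ?_⟩⟩)
          rw [fin1_eta]
        rw [hd0, zero_mul]
      · rw [hterm0 _ _ _ hdeg, mul_zero]
    rw [tsum_eq_sum hvanish]
    have hexp : ∀ Cα ∈ T', d i Cα z * DPow (Cα.1 0) (UPow (Cα.2 0) (f 0)) z
        = ∑ I ∈ Fq Cα.2, cc I Cα.2 i (Cα.1 0) z * DPow (Cα.1 0) (UPow (Cα.2 0) (f 0)) z := by
      intro Cα _
      rw [congrFun (hdfin i Cα) z, Finset.sum_mul]
    rw [Finset.sum_congr rfl hexp, Finset.sum_sigma', Finset.sum_sigma']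
    refine Finset.sum_bij_ne_zero
      (fun x _ _ => (⟨(((fun _ => x.2) : Fin 1 → MI N), x.1.2), x.1.1 0⟩ : Σ _ : Idx N 1, MI N))
      ?_ ?_ ?_ ?_
    · rintro ⟨Cα, I⟩ h₁ h₂
      obtain ⟨hCT', hIFq⟩ := Finset.mem_sigma.1 h₁
      have hccne : cc I Cα.2 i (Cα.1 0) z ≠ 0 := fun h => h₂ (by rw [h, zero_mul])
      have hC : Cα.1 0 ≤ I := by
        by_contra hcon
        rw [ccsupp I Cα.2 i (Cα.1 0) hcon] at hccne
        exact hccne rfl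
      obtain ⟨Iα₁, hIα₁T, hIm⟩ := Finset.mem_biUnion.1 hCT'
      obtain ⟨C', _, hC'⟩ := Finset.mem_image.1 hIm
      have hα : Iα₁.2 = Cα.2 := (Prod.ext_iff.1 hC').2
      have hdeg : degf (Cα.2 0) ≤ m₀ := by
        rw [← hα]
        exact (hTmem.1 hIα₁T).2
      exact Finset.mem_sigma.2 ⟨hTmem.2 ⟨Fq_spec hIFq, hdeg⟩, Finset.mem_Iic.2 hC⟩
    · rintro ⟨Cα₁, I₁⟩ h₁₁ h₁₂ ⟨Cα₂, I₂⟩ h₂₁ h₂₂ heq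
      have e1 : ((((fun _ => I₁) : Fin 1 → MI N), Cα₁.2) : Idx N 1)
          = (((fun _ => I₂) : Fin 1 → MI N), Cα₂.2) := congrArg Sigma.fst heq
      have e2 : Cα₁.1 0 = Cα₂.1 0 := congrArg Sigma.snd heq
      have e1' : ((fun _ : Fin 1 => I₁) : Fin 1 → MI N) = fun _ => I₂ := (Prod.ext_iff.1 e1).1
      have eI : I₁ = I₂ := congrFun e1' 0
      have eα : Cα₁.2 = Cα₂.2 := (Prod.ext_iff.1 e1).2
      have eC : Cα₁.1 = Cα₂.1 := by
        rw [← fin1_eta Cα₁.1, ← fin1_eta Cα₂.1, e2]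
      have hCC : Cα₁ = Cα₂ := Prod.ext eC eα
      rw [hCC, eI]
    · rintro ⟨Iα, C⟩ hy hg
      obtain ⟨hIαT, hCIic⟩ := Finset.mem_sigma.1 hy
      have hqne : q ((fun _ => Iα.1 0), Iα.2) ≠ 0 := by
        rw [fin1_eta]
        exact (hTmem.1 hIαT).1
      refine ⟨⟨(((fun _ => C) : Fin 1 → MI N), Iα.2), Iα.1 0⟩, ?_, ?_, ?_⟩
      · refine Finset.mem_sigma.2 ⟨Finset.mem_biUnion.2 ⟨Iα, hIαT,
          Finset.mem_image.2 ⟨C, hCIic, rfl⟩⟩, mem_Fq hqne⟩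
      · exact hg
      · show (⟨((((fun _ => Iα.1 0)) : Fin 1 → MI N), Iα.2), C⟩ : Σ _ : Idx N 1, MI N) = ⟨Iα, C⟩
        rw [show ((((fun _ => Iα.1 0)) : Fin 1 → MI N), Iα.2) = Iα from by rw [fin1_eta]]
    · rintro ⟨Cα, I⟩ h₁ h₂
      rfl
  -- Step 2 : the realization of the characteristic as a finite sum
  have step2 : realizeP (chiData q) f pt = ∑ Iα ∈ T,
      (-1:ℝ)^(∑ j, (Iα.1 0) j) * (DPow (Iα.1 0) (q Iα) pt * UPow (Iα.2 0) (f 0) pt) := by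
    rw [realizeP_one]
    set T₂ := T.image (fun Iα => (((fun _ => (0:MI N)) : Fin 1 → MI N), Iα.2)) with hT₂def
    have hupd : ∀ (Iα' : Idx N 1) (K : MI N),
        Function.update Iα'.1 0 K = fun _ : Fin 1 => K := by
      intro Iα' K
      funext j
      rw [Subsingleton.elim j (0 : Fin 1), Function.update_self]
    have hvanish : ∀ Iα' : Idx N 1, Iα' ∉ T₂ →
        chiData q Iα' pt * DPow (Iα'.1 0) (UPow (Iα'.2 0) (f 0)) pt = 0 := by
      intro Iα' hmem
      by_cases h0 : Iα'.1 0 = 0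
      · by_cases hdeg : degf (Iα'.2 0) ≤ m₀
        · have hq0 : ∀ K : MI N, q (Function.update Iα'.1 0 K, Iα'.2) = fun _ => (0:ℝ) := by
            intro K
            rw [hupd Iα' K]
            by_contra hne
            have hmemT : (((fun _ => K) : Fin 1 → MI N), Iα'.2) ∈ T :=
              hTmem.2 ⟨fun h => hne h, hdeg⟩
            refine hmem (Finset.mem_image.2 ⟨((fun _ => K), Iα'.2), hmemT, ?_⟩)
            refine Prod.ext ?_ rfl
            rw [← fin1_eta Iα'.1, h0]
          have hz : (fun K : MI N => (-1:ℝ)^(∑ i', K i')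
              * DPow K (q (Function.update Iα'.1 0 K, Iα'.2)) pt) = fun _ => 0 := by
            funext K
            rw [hq0 K, DPow_zero_fn]
            simp
          simp only [chiData, if_pos h0]
          rw [hz, tsum_zero, zero_mul]
        · rw [hterm0 _ _ _ hdeg, mul_zero]
      · simp only [chiData, if_neg h0]
        simp
    rw [tsum_eq_sum hvanish]
    have heval : ∀ Iα' ∈ T₂, chiData q Iα' pt * DPow (Iα'.1 0) (UPow (Iα'.2 0) (f 0)) pt
        = ∑ K ∈ Fq Iα'.2, (-1:ℝ)^(∑ i', K i')
            * (DPow K (q ((fun _ => K), Iα'.2)) pt * UPow (Iα'.2 0) (f 0) pt) := by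
      intro Iα' hmem
      have h0 : Iα'.1 0 = 0 := by
        obtain ⟨Iα, _, hIm⟩ := Finset.mem_image.1 hmem
        rw [← hIm]
      simp only [chiData, if_pos h0]
      have hDP0 : DPow (Iα'.1 0) (UPow (Iα'.2 0) (f 0)) = UPow (Iα'.2 0) (f 0) := by
        rw [h0]
        exact DPow_zero_index (fun j => rfl) _
      rw [hDP0]
      have htsum : (∑' K : MI N, (-1:ℝ)^(∑ i', K i')
            * DPow K (q (Function.update Iα'.1 0 K, Iα'.2)) pt)
          = ∑ K ∈ Fq Iα'.2, (-1:ℝ)^(∑ i', K i') * DPow K (q ((fun _ => K), Iα'.2)) pt := by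
        have h1 : (∑' K : MI N, (-1:ℝ)^(∑ i', K i')
              * DPow K (q (Function.update Iα'.1 0 K, Iα'.2)) pt)
            = ∑' K : MI N, (-1:ℝ)^(∑ i', K i') * DPow K (q ((fun _ => K), Iα'.2)) pt :=
          tsum_congr fun K => by rw [hupd Iα' K]
        rw [h1]
        refine tsum_eq_sum fun K hK => ?_
        rw [Fq_not hK, DPow_zero_fn]
        simp
      rw [htsum, Finset.sum_mul]
      exact Finset.sum_congr rfl fun K _ => by ring
    rw [Finset.sum_congr rfl heval, Finset.sum_sigma']
    refine Finset.sum_bij_ne_zero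
      (fun x _ _ => ((((fun _ => x.2) : Fin 1 → MI N), x.1.2) : Idx N 1)) ?_ ?_ ?_ ?_
    · rintro ⟨Iα', K⟩ h₁ h₂
      obtain ⟨hT₂m, hKFq⟩ := Finset.mem_sigma.1 h₁
      obtain ⟨Iα₁, hIα₁T, hIm⟩ := Finset.mem_image.1 hT₂m
      have hα : Iα₁.2 = Iα'.2 := (Prod.ext_iff.1 hIm).2
      have hdeg : degf (Iα'.2 0) ≤ m₀ := by
        rw [← hα]
        exact (hTmem.1 hIα₁T).2
      exact hTmem.2 ⟨Fq_spec hKFq, hdeg⟩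
    · rintro ⟨Iα'₁, K₁⟩ h₁₁ h₁₂ ⟨Iα'₂, K₂⟩ h₂₁ h₂₂ heq
      have heq' : ((((fun _ => K₁) : Fin 1 → MI N), Iα'₁.2) : Idx N 1)
          = (((fun _ => K₂) : Fin 1 → MI N), Iα'₂.2) := heq
      have eK' : ((fun _ : Fin 1 => K₁) : Fin 1 → MI N) = fun _ => K₂ := (Prod.ext_iff.1 heq').1
      have eK : K₁ = K₂ := congrFun eK' 0
      have eα : Iα'₁.2 = Iα'₂.2 := (Prod.ext_iff.1 heq').2
      obtain ⟨hT₂m₁, _⟩ := Finset.mem_sigma.1 h₁₁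
      obtain ⟨hT₂m₂, _⟩ := Finset.mem_sigma.1 h₂₁
      obtain ⟨Iα₁, _, hIm₁⟩ := Finset.mem_image.1 hT₂m₁
      obtain ⟨Iα₂, _, hIm₂⟩ := Finset.mem_image.1 hT₂m₂
      have e1 : ((fun _ : Fin 1 => (0 : MI N))) = Iα'₁.1 := (Prod.ext_iff.1 hIm₁).1
      have e2 : ((fun _ : Fin 1 => (0 : MI N))) = Iα'₂.1 := (Prod.ext_iff.1 hIm₂).1
      have hII : Iα'₁ = Iα'₂ := Prod.ext (by rw [← e1, ← e2]) eα
      rw [hII, eK]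
    · rintro Iα hIαT hg
      have hqne : q ((fun _ => Iα.1 0), Iα.2) ≠ 0 := by
        rw [fin1_eta]
        exact (hTmem.1 hIαT).1
      refine ⟨⟨(((fun _ => (0:MI N)) : Fin 1 → MI N), Iα.2), Iα.1 0⟩, ?_, ?_, ?_⟩
      · exact Finset.mem_sigma.2 ⟨Finset.mem_image.2 ⟨Iα, hIαT, rfl⟩, mem_Fq hqne⟩
      · show (-1:ℝ)^(∑ i', (Iα.1 0) i')
            * (DPow (Iα.1 0) (q ((fun _ => Iα.1 0), Iα.2)) pt * UPow (Iα.2 0) (f 0) pt) ≠ 0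
        rw [show ((((fun _ => Iα.1 0)) : Fin 1 → MI N), Iα.2) = Iα from by rw [fin1_eta]]
        exact hg
      · show ((((fun _ => Iα.1 0)) : Fin 1 → MI N), Iα.2) = Iα
        rw [fin1_eta]
    · rintro ⟨Iα', K⟩ h₁ h₂
      rfl
  -- assembly
  have hglocal : ∀ (Iα : Idx N 1) (i : Fin N), IsLocal (fun z => ∑ C ∈ Finset.Iic (Iα.1 0),
      cc (Iα.1 0) Iα.2 i C z * DPow C (UPow (Iα.2 0) (f 0)) z) :=
    fun Iα i => IsLocal.finsum' _ fun C _ => (ccloc _ _ i C).mul' ((hvloc _).dpow C)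
  calc realizeP q f pt
      = ∑ Iα ∈ T, q Iα pt * DPow (Iα.1 0) (UPow (Iα.2 0) (f 0)) pt := step1
    _ = ∑ Iα ∈ T, ((∑ i : Fin N, Dtot i (fun z => ∑ C ∈ Finset.Iic (Iα.1 0),
            cc (Iα.1 0) Iα.2 i C z * DPow C (UPow (Iα.2 0) (f 0)) z) pt)
          + (-1:ℝ)^(∑ j, (Iα.1 0) j)
            * (DPow (Iα.1 0) (q Iα) pt * UPow (Iα.2 0) (f 0) pt)) := by
        refine Finset.sum_congr rfl fun Iα _ => ?_
        have h := ccid (Iα.1 0) Iα.2 (hvloc (Iα.2 0)) pt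
        have he : ((((fun _ => Iα.1 0)) : Fin 1 → MI N), Iα.2) = Iα := by
          rw [fin1_eta]
        rw [he] at h
        exact h
    _ = (∑ Iα ∈ T, ∑ i : Fin N, Dtot i (fun z => ∑ C ∈ Finset.Iic (Iα.1 0),
            cc (Iα.1 0) Iα.2 i C z * DPow C (UPow (Iα.2 0) (f 0)) z) pt)
          + ∑ Iα ∈ T, (-1:ℝ)^(∑ j, (Iα.1 0) j)
            * (DPow (Iα.1 0) (q Iα) pt * UPow (Iα.2 0) (f 0) pt) := Finset.sum_add_distrib
    _ = (∑ i : Fin N, Dtot i (realizeP (d i) f) pt) + realizeP (chiData q) f pt := by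
        rw [← step2]
        congr 1
        rw [Finset.sum_comm]
        refine Finset.sum_congr rfl fun i _ => ?_
        rw [← Dtot_finsum' T (fun Iα _ => hglocal Iα i) i pt]
        refine congrArg (fun F => Dtot i F pt) ?_
        funext z
        exact (step3 i z).symm

end JetBundle
end
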